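/- arXiv:math/0403396 — 10 statements merged into one kernel-verified Lean document; each statement's English description precedes it below -/
import Mathlib

section
/- Let N ≥ 2 be an integer, let ζ := ζ_N = exp(2πi/N), and let s ≥ 0 be an integer. Then ∑_{k=1}^{N−1} ζ^{k s} / (1 − ζ^{−k}) = (N − 1)/2 − [s]_N. -/
/-- `ζ_N = exp(2πi/N)`. -/
noncomputable def zeta (N : ℕ) : ℂ := Complex.exp (2 * Real.pi * Complex.I / N)

lemma zeta_prim (N : ℕ) (hN : 2 ≤ N) : IsPrimitiveRoot (zeta N) N := by
  have h0 : (N : ℕ) ≠ 0 := by omega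
  simpa [zeta, mul_comm] using Complex.isPrimitiveRoot_exp N h0

lemma pow_sum_aux (N : ℕ) (hN : 2 ≤ N) (m : ℕ) (hm : ¬ N ∣ m) :
    ∑ k ∈ Finset.Icc 1 (N - 1), zeta N ^ (k * m) = -1 := by
  have hζ := zeta_prim N hN
  set z := zeta N ^ m with hz
  have hz1 : z ≠ 1 := by
    rw [hz, Ne, hζ.pow_eq_one_iff_dvd]; exact hm
  have hgeom : ∑ k ∈ Finset.range N, z ^ k = 0 := by
    have hzN : (z ^ N - 1) = 0 := by
      rw [hz, ← pow_mul, mul_comm, pow_mul, hζ.pow_eq_one, one_pow, sub_self]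
    rw [geom_sum_eq hz1 N, hzN, zero_div]
  have hins : Finset.range N = insert 0 (Finset.Icc 1 (N - 1)) := by
    ext x; simp [Finset.mem_range, Finset.mem_Icc]; omega
  rw [hins, Finset.sum_insert (by simp)] at hgeom
  have hc : ∀ k ∈ Finset.Icc 1 (N - 1), zeta N ^ (k * m) = z ^ k := by
    intro k _; rw [hz, ← pow_mul, mul_comm]
  rw [Finset.sum_congr rfl hc]
  simp at hgeom
  linear_combination hgeom

lemma base_aux (N : ℕ) (hN : 2 ≤ N) :
    ∑ k ∈ Finset.Icc 1 (N - 1), 1 / (1 - (zeta N)⁻¹ ^ k) = ((N : ℂ) - 1) / 2 := by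
  have hζ := zeta_prim N hN
  have hζ0 : zeta N ≠ 0 := Complex.exp_ne_zero _
  set S := ∑ k ∈ Finset.Icc 1 (N - 1), 1 / (1 - (zeta N)⁻¹ ^ k) with hS
  have hIcc : Finset.Icc 1 (N - 1) = Finset.Ico 1 N := by
    ext x; simp only [Finset.mem_Ico, Finset.mem_Icc]; omega
  have hrefl : S = ∑ k ∈ Finset.Icc 1 (N - 1), 1 / (1 - (zeta N)⁻¹ ^ (N - k)) := by
    rw [hS, hIcc, Finset.sum_Ico_eq_sum_range, Finset.sum_Ico_eq_sum_range,
      ← Finset.sum_range_reflect]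
    apply Finset.sum_congr rfl
    intro i hi
    simp only [Finset.mem_range] at hi
    have he : 1 + (N - 1 - 1 - i) = N - (1 + i) := by omega
    rw [he]
  have h2 : S + S = (N : ℂ) - 1 := by
    nth_rewrite 2 [hrefl]
    rw [← Finset.sum_add_distrib]
    have hterm : ∀ k ∈ Finset.Icc 1 (N - 1),
        1 / (1 - (zeta N)⁻¹ ^ k) + 1 / (1 - (zeta N)⁻¹ ^ (N - k)) = 1 := by
      intro k hk
      simp only [Finset.mem_Icc] at hk
      have h1 : zeta N ^ k ≠ 1 :=
        hζ.pow_ne_one_of_pos_of_lt (by omega) (by omega)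
      have hNk : (zeta N)⁻¹ ^ (N - k) = zeta N ^ k := by
        rw [inv_pow, pow_sub₀ _ hζ0 (by omega : k ≤ N), hζ.pow_eq_one, one_mul, inv_inv]
      have hk0 : zeta N ^ k ≠ 0 := pow_ne_zero _ hζ0
      have hb : (1 : ℂ) - zeta N ^ k ≠ 0 := sub_ne_zero.mpr (Ne.symm h1)
      rw [hNk, inv_pow]
      have hb' : (1 : ℂ) - (zeta N ^ k)⁻¹ ≠ 0 := by
        rw [Ne, sub_eq_zero]
        intro h
        exact h1 (by rw [← inv_inv (zeta N ^ k), ← h, inv_one])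
      rw [div_add_div _ _ hb' hb, div_eq_one_iff_eq (mul_ne_zero hb' hb)]
      linear_combination (-1 : ℂ) * inv_mul_cancel₀ hk0
    rw [Finset.sum_congr rfl hterm, Finset.sum_const, nsmul_eq_mul, mul_one,
      Nat.card_Icc]
    push_cast [Nat.cast_sub (by omega : 1 ≤ N)]
    ring
  linear_combination h2 / 2

lemma main_aux (N : ℕ) (hN : 2 ≤ N) (r : ℕ) (hr : r < N) :
    ∑ k ∈ Finset.Icc 1 (N - 1), zeta N ^ (k * r) / (1 - (zeta N)⁻¹ ^ k)
      = ((N : ℂ) - 1) / 2 - r := by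
  have hζ := zeta_prim N hN
  have hζ0 : zeta N ≠ 0 := Complex.exp_ne_zero _
  induction r with
  | zero => simpa using base_aux N hN
  | succ r ih =>
    have hr' : r < N := by omega
    have hstep : ∀ k ∈ Finset.Icc 1 (N - 1),
        zeta N ^ (k * (r + 1)) / (1 - (zeta N)⁻¹ ^ k)
          = zeta N ^ (k * r) / (1 - (zeta N)⁻¹ ^ k) + zeta N ^ (k * (r + 1)) := by
      intro k hk
      simp only [Finset.mem_Icc] at hk
      have h1 : zeta N ^ k ≠ 1 := hζ.pow_ne_one_of_pos_of_lt (by omega) (by omega)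
      have hk0 : zeta N ^ k ≠ 0 := pow_ne_zero _ hζ0
      have hb' : (1 : ℂ) - (zeta N)⁻¹ ^ k ≠ 0 := by
        rw [inv_pow, Ne, sub_eq_zero]
        intro h
        exact h1 (by rw [← inv_inv (zeta N ^ k), ← h, inv_one])
      have hpow : zeta N ^ (k * (r + 1)) = zeta N ^ (k * r) * zeta N ^ k := by
        rw [Nat.mul_succ, pow_add]
      rw [inv_pow] at hb' ⊢
      have key : zeta N ^ (k * r) * zeta N ^ k
          = zeta N ^ (k * r) + zeta N ^ (k * r) * zeta N ^ k * (1 - (zeta N ^ k)⁻¹) := by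
        linear_combination (zeta N ^ (k * r)) * mul_inv_cancel₀ hk0
      rw [hpow]
      conv_lhs => rw [key]
      rw [add_div, mul_div_assoc, div_self hb', mul_one]
    rw [Finset.sum_congr rfl hstep, Finset.sum_add_distrib, ih hr',
      pow_sum_aux N hN (r + 1)
        (fun hdvd => absurd (Nat.le_of_dvd (by omega) hdvd) (by omega))]
    push_cast
    ring

/-- For an integer `N ≥ 2`, `ζ := ζ_N = exp(2πi/N)`, and an integer `s ≥ 0`,
`∑_{k=1}^{N-1} ζ^(k s) / (1 - ζ⁻ᵏ) = (N - 1)/2 - [s]_N`. -/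
theorem stmt_1 (N : ℕ) (hN : 2 ≤ N) (s : ℕ) :
    ∑ k ∈ Finset.Icc 1 (N - 1), zeta N ^ (k * s) / (1 - (zeta N)⁻¹ ^ k)
      = ((N : ℂ) - 1) / 2 - ((s % N : ℕ) : ℂ) := by
  have hζ := zeta_prim N hN
  have hmod : ∀ m : ℕ, zeta N ^ m = zeta N ^ (m % N) := by
    intro m
    conv_lhs => rw [← Nat.mod_add_div m N, pow_add, pow_mul, hζ.pow_eq_one, one_pow, mul_one]
  have hred : ∀ k, zeta N ^ (k * s) = zeta N ^ (k * (s % N)) := by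
    intro k
    have heq : k * s % N = k * (s % N) % N := by
      conv_rhs => rw [Nat.mul_mod, Nat.mod_mod_of_dvd s dvd_rfl, ← Nat.mul_mod]
    rw [hmod (k * s), hmod (k * (s % N)), heq]
  simp_rw [hred]
  exact main_aux N hN (s % N) (Nat.mod_lt s (by omega))
end

section
/- Let m > n ≥ 1 be integers with gcd(m, n) = 1. Then all the denominators below are nonzero and ∑_{l=0}^{n−1} ∑_{k=1}^{2m−1} 2(ζ_{2m}^{2nk} − 1) / ((1 − ζ_{2m}^{−k} ζ_{2n}^{−l})(1 − ζ_{2m}^{−k} ζ_{2n}^{l})) = 4n(m − n − 1). -/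
open Finset Polynomial

theorem inv_sub_one_add_inv_inv_sub_one {K : Type*} [Field K] {z : K} (h0 : z ≠ 0) (h1 : z ≠ 1) :
    (z - 1)⁻¹ + (z⁻¹ - 1)⁻¹ = -1 := by
  have h1' : z - 1 ≠ 0 := sub_ne_zero.2 h1
  rw [show z⁻¹ - 1 = -(z - 1) / z by field_simp; ring, inv_div]
  field_simp
  ring

namespace IsPrimitiveRoot

variable {K : Type*} [Field K] {μ : K} {N : ℕ}

theorem sum_range_pow_pow_eq_zero (hμ : IsPrimitiveRoot μ N) {i : ℕ} (hi0 : 0 < i)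
    (hiN : i < N) : ∑ k ∈ range N, (μ ^ k) ^ i = 0 := by
  simp_rw [← pow_mul, mul_comm _ i, pow_mul]
  rw [geom_sum_eq (hμ.pow_ne_one_of_pos_of_lt hi0.ne' hiN), pow_right_comm, hμ.pow_eq_one,
    one_pow, sub_self, zero_div]

theorem sum_Ico_pow_pow_eq_neg_one (hμ : IsPrimitiveRoot μ N) {i : ℕ} (hi0 : 0 < i)
    (hiN : i < N) : ∑ k ∈ Ico 1 N, (μ ^ k) ^ i = -1 := by
  have h := hμ.sum_range_pow_pow_eq_zero hi0 hiN
  rw [sum_range_eq_add_Ico _ (hi0.trans hiN), pow_zero, one_pow] at h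
  linear_combination h

theorem sum_range_eval_pow (hμ : IsPrimitiveRoot μ N) {p : K[X]} (hp : p.natDegree < N) :
    ∑ k ∈ range N, p.eval (μ ^ k) = N * p.coeff 0 := by
  simp_rw [eval_eq_sum_range]
  rw [sum_comm, sum_eq_single 0]
  · simp [mul_comm]
  · intro i hi hi0
    rw [← mul_sum, hμ.sum_range_pow_pow_eq_zero (Nat.pos_of_ne_zero hi0)
      (by rw [mem_range] at hi; omega), mul_zero]
  · simp

theorem sum_Ico_eval_pow (hμ : IsPrimitiveRoot μ N) {p : K[X]} (hp : p.natDegree < N) :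
    ∑ k ∈ Ico 1 N, p.eval (μ ^ k) = N * p.coeff 0 - p.eval 1 := by
  rw [← hμ.sum_range_eval_pow hp, sum_range_eq_add_Ico _ (by omega), pow_zero]
  ring

theorem two_mul_sum_Ico_inv_pow_sub_one (hμ : IsPrimitiveRoot μ N) (hN : 0 < N) :
    2 * ∑ k ∈ Ico 1 N, (μ ^ k - 1)⁻¹ = 1 - N := by
  have hreflect : ∑ k ∈ Ico 1 N, (μ ^ (N - k) - 1)⁻¹ = ∑ k ∈ Ico 1 N, (μ ^ k - 1)⁻¹ := by
    simpa using sum_Ico_reflect (fun k ↦ (μ ^ k - 1)⁻¹) 1 (Nat.le_succ N)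
  have hpair : ∀ k ∈ Ico 1 N, (μ ^ k - 1)⁻¹ + (μ ^ (N - k) - 1)⁻¹ = -1 := fun k hk ↦ by
    rw [mem_Ico] at hk
    have hinv : μ ^ (N - k) = (μ ^ k)⁻¹ := by
      refine eq_inv_of_mul_eq_one_left ?_
      rw [← pow_add, Nat.sub_add_cancel hk.2.le, hμ.pow_eq_one]
    rw [hinv]
    exact inv_sub_one_add_inv_inv_sub_one (pow_ne_zero _ (hμ.ne_zero hN.ne'))
      (hμ.pow_ne_one_of_pos_of_lt (by omega) hk.2)
  rw [two_mul]
  nth_rw 2 [← hreflect]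
  rw [← sum_add_distrib, sum_congr rfl hpair, sum_const, Nat.card_Ico, nsmul_eq_mul,
    Nat.cast_sub hN]
  ring

theorem sum_Ico_pow_div_sub_one (hμ : IsPrimitiveRoot μ N) {a : ℕ} (ha : 0 < a) (haN : a ≤ N) :
    ∑ k ∈ Ico 1 N, (μ ^ k) ^ a / (μ ^ k - 1) = (N - a) + ∑ k ∈ Ico 1 N, (μ ^ k - 1)⁻¹ := by
  have hsplit : ∀ k ∈ Ico 1 N,
      (μ ^ k) ^ a / (μ ^ k - 1) = ∑ i ∈ range a, (μ ^ k) ^ i + (μ ^ k - 1)⁻¹ := fun k hk ↦ by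
    rw [mem_Ico] at hk
    rw [geom_sum_eq (hμ.pow_ne_one_of_pos_of_lt (by omega) hk.2)]
    ring
  have hpoly : ∑ i ∈ range a, ∑ k ∈ Ico 1 N, (μ ^ k) ^ i = N - a := by
    rw [sum_range_eq_add_Ico _ ha, sum_congr rfl fun i hi ↦
      hμ.sum_Ico_pow_pow_eq_neg_one (mem_Ico.1 hi).1 (by rw [mem_Ico] at hi; omega)]
    simp [Nat.cast_sub ha, Nat.cast_sub (ha.trans_le haN)]
  rw [sum_congr rfl hsplit, sum_add_distrib, sum_comm, hpoly]

theorem two_mul_sum_Ico_sq_mul_pow_sub_one_div_sq (hμ : IsPrimitiveRoot μ N) {M : ℕ}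
    (hMN : M < N) :
    2 * ∑ k ∈ Ico 1 N, (μ ^ k) ^ 2 * ((μ ^ k) ^ M - 1) / (μ ^ k - 1) ^ 2
      = (M : K) * (N - M - 2) := by
  have hsplit : ∀ k ∈ Ico 1 N, (μ ^ k) ^ 2 * ((μ ^ k) ^ M - 1) / (μ ^ k - 1) ^ 2
      = ∑ j ∈ range M, (μ ^ k) ^ (j + 2) / (μ ^ k - 1) := fun k hk ↦ by
    rw [mem_Ico] at hk
    have h1 : μ ^ k - 1 ≠ 0 := sub_ne_zero.2 (hμ.pow_ne_one_of_pos_of_lt (by omega) hk.2)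
    rw [← sum_div, ← geom_sum_mul]
    simp_rw [pow_add, ← sum_mul]
    field_simp
  have hgauss : ∀ M : ℕ, 2 * ∑ j ∈ range M, (j : K) = M * (M - 1) := by
    intro M
    induction M with
    | zero => simp
    | succ M ih => rw [sum_range_succ, mul_add, ih]; push_cast; ring
  rw [sum_congr rfl hsplit, sum_comm, sum_congr rfl fun j hj ↦
    hμ.sum_Ico_pow_div_sub_one (a := j + 2) (by omega) (by rw [mem_range] at hj; omega)]
  rw [sum_add_distrib, sum_const, card_range, nsmul_eq_mul, mul_add,
    mul_left_comm, hμ.two_mul_sum_Ico_inv_pow_sub_one (by omega)]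
  simp only [sum_sub_distrib, Nat.cast_add, Nat.cast_ofNat, sum_add_distrib, sum_const,
    card_range, nsmul_eq_mul]
  linear_combination -hgauss M

theorem sum_Ico_sq_mul_pow_sub_one_div_eq_zero (hμ : IsPrimitiveRoot μ N) {M : ℕ}
    (hM : 0 < M) (hMN : M < N) {a : K} (ha : a ^ M = 1) (ha2 : a ^ 2 ≠ 1)
    (hne : ∀ k ∈ Ico 1 N, μ ^ k ≠ a⁻¹ ∧ μ ^ k ≠ a) :
    ∑ k ∈ Ico 1 N, (μ ^ k) ^ 2 * ((μ ^ k) ^ M - 1) / ((μ ^ k - a⁻¹) * (μ ^ k - a)) = 0 := by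
  have ha0 : a ≠ 0 := by rintro rfl; simp [hM.ne'] at ha
  have ha1 : a ≠ 1 := by rintro rfl; simp at ha2
  have hinv : a⁻¹ ≠ a := fun h ↦ ha2 (by rw [sq]; nth_rw 1 [← h]; exact inv_mul_cancel₀ ha0)
  obtain ⟨P, hP⟩ : (X - C a⁻¹) * (X - C a) ∣ X ^ M - 1 :=
    (isCoprime_X_sub_C_of_isUnit_sub (sub_ne_zero.2 hinv).isUnit).mul_dvd
      (dvd_iff_isRoot.2 (by simp [ha])) (dvd_iff_isRoot.2 (by simp [ha]))
  have hP1 : P.eval 1 = 0 := by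
    have h := congrArg (eval 1) hP
    simp only [eval_sub, eval_pow, eval_X, one_pow, eval_one, sub_self, eval_mul, eval_C] at h
    exact (mul_eq_zero.1 h.symm).resolve_left
      (mul_ne_zero (sub_ne_zero.2 (inv_ne_one.2 ha1).symm) (sub_ne_zero.2 ha1.symm))
  have hdeg : (X ^ 2 * P).natDegree < N := by
    have hP0 : P ≠ 0 := by
      rintro rfl
      exact X_pow_sub_C_ne_zero hM (1 : K) (by simpa using hP)
    have h := congrArg natDegree hP
    rw [natDegree_mul (mul_ne_zero (X_sub_C_ne_zero _) (X_sub_C_ne_zero _)) hP0,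
      natDegree_mul (X_sub_C_ne_zero _) (X_sub_C_ne_zero _), natDegree_X_sub_C,
      natDegree_X_sub_C, ← C_1, natDegree_X_pow_sub_C] at h
    rw [natDegree_mul (pow_ne_zero _ X_ne_zero) hP0, natDegree_X_pow]
    omega
  have hterm : ∀ k ∈ Ico 1 N, (μ ^ k) ^ 2 * ((μ ^ k) ^ M - 1) / ((μ ^ k - a⁻¹) * (μ ^ k - a))
      = (X ^ 2 * P).eval (μ ^ k) := fun k hk ↦ by
    have h := congrArg (eval (μ ^ k)) hP
    simp only [eval_sub, eval_pow, eval_X, eval_one, eval_mul, eval_C] at h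
    rw [h, eval_mul, eval_pow, eval_X, mul_div_assoc, mul_div_cancel_left₀ _
      (mul_ne_zero (sub_ne_zero.2 (hne k hk).1) (sub_ne_zero.2 (hne k hk).2))]
  rw [sum_congr rfl hterm, hμ.sum_Ico_eval_pow hdeg]
  simp [hP1]

theorem pow_ne_neg_one {ω : K} {n l : ℕ} (hω : IsPrimitiveRoot ω (2 * n)) (hl : l < n) :
    ω ^ l ≠ -1 := by
  rw [← (hω.pow (by omega) (mul_comm 2 n)).eq_neg_one_of_two_right]
  exact fun h ↦ hl.ne (hω.pow_inj (by omega) (by omega) h)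

theorem pow_ne_of_pow_two_mul_eq_one {m n : ℕ} (hμ : IsPrimitiveRoot μ (2 * m))
    (hmn : m.Coprime n) {k : ℕ} (hk0 : 0 < k) (hk : k < 2 * m) {a : K} (ha : a ^ (2 * n) = 1)
    (ha1 : a ≠ -1) : μ ^ k ≠ a := by
  rintro rfl
  have hdvd : 2 * m ∣ 2 * (k * n) := by
    rw [← hμ.pow_eq_one_iff_dvd, mul_left_comm, pow_mul, ha]
  obtain ⟨c, rfl⟩ : m ∣ k := hmn.dvd_of_dvd_mul_right (Nat.dvd_of_mul_dvd_mul_left two_pos hdvd)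
  obtain rfl : c = 1 := by
    rcases Nat.lt_or_ge c 2 with hc | hc
    · interval_cases c <;> omega
    · nlinarith
  rw [mul_one] at ha1
  exact ha1 (hμ.pow (by omega) (mul_comm 2 m)).eq_neg_one_of_two_right

theorem pow_ne_pow_of_coprime {m n : ℕ} {ω : K} (hμ : IsPrimitiveRoot μ (2 * m))
    (hω : IsPrimitiveRoot ω (2 * n)) (hmn : m.Coprime n) {k l : ℕ} (hk0 : 0 < k)
    (hk : k < 2 * m) (hl : l < n) : μ ^ k ≠ (ω ^ l)⁻¹ ∧ μ ^ k ≠ ω ^ l := by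
  have hpow : (ω ^ l) ^ (2 * n) = 1 := by rw [pow_right_comm, hω.pow_eq_one, one_pow]
  have hne := hω.pow_ne_neg_one hl
  refine ⟨hμ.pow_ne_of_pow_two_mul_eq_one hmn hk0 hk ?_ ?_,
    hμ.pow_ne_of_pow_two_mul_eq_one hmn hk0 hk hpow hne⟩
  · rw [inv_pow, hpow, inv_one]
  · rwa [ne_eq, inv_eq_iff_eq_inv, inv_neg_one]

end IsPrimitiveRoot

theorem one_sub_inv_mul_ne_zero {K : Type*} [Field K] {z b : K} (hz : z ≠ 0) (h : z ≠ b) :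
    1 - z⁻¹ * b ≠ 0 :=
  sub_ne_zero.2 fun h' ↦ h ((inv_mul_eq_one₀ hz).1 h'.symm)

theorem two_mul_pow_mul_sub_one_div_one_sub_inv_pow_mul {K : Type*} [Field K] {μ : K}
    (hμ : μ ≠ 0) (M k : ℕ) (b c : K) :
    2 * (μ ^ (M * k) - 1) / ((1 - μ⁻¹ ^ k * b) * (1 - μ⁻¹ ^ k * c))
      = 2 * ((μ ^ k) ^ 2 * ((μ ^ k) ^ M - 1) / ((μ ^ k - b) * (μ ^ k - c))) := by
  have hμk : μ ^ k ≠ 0 := pow_ne_zero _ hμ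
  rw [inv_pow, mul_comm M, pow_mul, show (1 - (μ ^ k)⁻¹ * b) * (1 - (μ ^ k)⁻¹ * c)
    = (μ ^ k - b) * (μ ^ k - c) / (μ ^ k) ^ 2 by field_simp]
  field_simp

/-- Let `m > n ≥ 1` be integers with `gcd(m, n) = 1`.  Then all the
denominators below are nonzero and
`∑_{l=0}^{n-1} ∑_{k=1}^{2m-1} 2(ζ_{2m}^{2nk} - 1) / ((1 - ζ_{2m}^{-k} ζ_{2n}^{-l})(1 - ζ_{2m}^{-k} ζ_{2n}^{l})) = 4n(m - n - 1)`. -/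
theorem stmt_3 (m n : ℕ) (hn : 1 ≤ n) (hmn : n < m) (hgcd : Nat.gcd m n = 1) :
    (∀ l ∈ Finset.range n, ∀ k ∈ Finset.Icc 1 (2 * m - 1),
        (1 : ℂ) - (zeta (2 * m))⁻¹ ^ k * (zeta (2 * n))⁻¹ ^ l ≠ 0 ∧
        (1 : ℂ) - (zeta (2 * m))⁻¹ ^ k * zeta (2 * n) ^ l ≠ 0) ∧
    ∑ l ∈ Finset.range n, ∑ k ∈ Finset.Icc 1 (2 * m - 1),
        2 * (zeta (2 * m) ^ (2 * n * k) - 1) /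
          ((1 - (zeta (2 * m))⁻¹ ^ k * (zeta (2 * n))⁻¹ ^ l) *
            (1 - (zeta (2 * m))⁻¹ ^ k * zeta (2 * n) ^ l))
      = ((4 * n * (m - n - 1) : ℕ) : ℂ) := by
  have hμ : IsPrimitiveRoot (zeta (2 * m)) (2 * m) := Complex.isPrimitiveRoot_exp _ (by omega)
  have hω : IsPrimitiveRoot (zeta (2 * n)) (2 * n) := Complex.isPrimitiveRoot_exp _ (by omega)
  have hμ0 : zeta (2 * m) ≠ 0 := hμ.ne_zero (by omega)
  have hIcc : Icc 1 (2 * m - 1) = Ico 1 (2 * m) := by ext; simp only [mem_Icc, mem_Ico]; omega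
  have hden : ∀ l < n, ∀ k ∈ Ico 1 (2 * m),
      zeta (2 * m) ^ k ≠ (zeta (2 * n) ^ l)⁻¹ ∧ zeta (2 * m) ^ k ≠ zeta (2 * n) ^ l :=
    fun l hl k hk ↦ hμ.pow_ne_pow_of_coprime hω hgcd (mem_Ico.1 hk).1 (mem_Ico.1 hk).2 hl
  refine ⟨fun l hl k hk ↦ ?_, ?_⟩
  · obtain ⟨h1, h2⟩ := hden l (mem_range.1 hl) k (hIcc ▸ hk)
    rw [inv_pow, inv_pow]
    exact ⟨one_sub_inv_mul_ne_zero (pow_ne_zero _ hμ0) h1,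
      one_sub_inv_mul_ne_zero (pow_ne_zero _ hμ0) h2⟩
  simp only [two_mul_pow_mul_sub_one_div_one_sub_inv_pow_mul hμ0]
  simp only [inv_pow, ← mul_sum, hIcc]
  rw [sum_range_eq_add_Ico _ hn, sum_eq_zero (s := Ico 1 n) fun l hl ↦ ?_, add_zero]
  · simp only [pow_zero, inv_one, ← sq]
    rw [hμ.two_mul_sum_Ico_sq_mul_pow_sub_one_div_sq (by omega),
      show m - n - 1 = m - (n + 1) by omega]
    push_cast [Nat.cast_sub (show n + 1 ≤ m by omega)]
    ring
  · obtain ⟨hl1, hln⟩ := mem_Ico.1 hl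
    refine hμ.sum_Ico_sq_mul_pow_sub_one_div_eq_zero (by omega) (by omega)
      (by rw [pow_right_comm, hω.pow_eq_one, one_pow]) ?_ (hden l hln)
    rw [← pow_mul]
    exact hω.pow_ne_one_of_pos_of_lt (by omega) (by omega)
end

section
/- Let 1 ≤ m < n be integers with gcd(m, n) = 1 and let r := n mod m (so 0 ≤ r ≤ m − 1). Then all the denominators below are nonzero and ∑_{l=0}^{n−1} ∑_{k=1}^{2m−1} 2(ζ_{2m}^{2nk} − 1) / ((1 − ζ_{2m}^{−k} ζ_{2n}^{−l})(1 − ζ_{2m}^{−k} ζ_{2n}^{l})) = 4mn − 4n(r + 1). -/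
open Finset

section Reindexing

variable {G M : Type*} [DivisionMonoid G] [AddCommMonoid M]

theorem pow_sub_eq_inv_pow_of_pow_eq_one {ζ : G} {N l : ℕ} (hζ : ζ ^ N = 1) (hl : l ≤ N) :
    ζ ^ (N - l) = ζ⁻¹ ^ l := by
  rw [inv_pow]
  exact eq_inv_of_mul_eq_one_left (by rw [← pow_add, Nat.sub_add_cancel hl, hζ])

theorem sum_range_inv_pow_of_pow_eq_one {ζ : G} {N : ℕ} (hζ : ζ ^ N = 1) (f : G → M) :
    ∑ k ∈ range N, f (ζ⁻¹ ^ k) = ∑ k ∈ range N, f (ζ ^ k) := by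
  cases N with
  | zero => simp
  | succ N =>
    rw [sum_range_succ', sum_range_succ', pow_zero, pow_zero, ← sum_range_reflect]
    congr 1
    refine sum_congr rfl fun k hk ↦ congrArg f ?_
    have := mem_range.1 hk
    rw [← pow_sub_eq_inv_pow_of_pow_eq_one hζ (by omega)]
    congr 1
    omega

theorem sum_range_two_mul_pow_add_apply_one {ω : G} {n : ℕ} (hω : ω ^ (2 * n) = 1) (f : G → M) :
    ∑ l ∈ range (2 * n), f (ω ^ l) + f 1
      = ∑ l ∈ range n, (f (ω ^ l) + f (ω⁻¹ ^ l)) + f (ω ^ n) := by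
  have hupper : ∑ l ∈ range n, f (ω ^ (n + l)) + f 1
      = ∑ l ∈ range n, f (ω⁻¹ ^ l) + f (ω ^ n) := by
    have hωn : ω⁻¹ ^ n = ω ^ n := by
      rw [← pow_sub_eq_inv_pow_of_pow_eq_one hω (by omega)]
      congr 1
      omega
    rw [← hω, ← hωn, ← sum_range_succ (fun l ↦ f (ω⁻¹ ^ l)), two_mul,
      ← sum_range_succ (fun l ↦ f (ω ^ (n + l))), ← sum_range_reflect]
    refine sum_congr rfl fun l hl ↦ congrArg f ?_
    have := mem_range.1 hl
    rw [← pow_sub_eq_inv_pow_of_pow_eq_one hω (by omega)]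
    congr 1
    omega
  rw [two_mul, sum_range_add, add_assoc, hupper, sum_add_distrib, add_assoc]

end Reindexing

theorem sum_range_two_mul_pow_of_pow_eq_neg_one {R M : Type*} [Ring R] [AddCommMonoid M]
    {ξ : R} {m : ℕ} (hξ : ξ ^ m = -1) (f : R → M) :
    ∑ k ∈ range (2 * m), f (ξ ^ k) = ∑ k ∈ range m, (f (ξ ^ k) + f (-ξ ^ k)) := by
  rw [two_mul, sum_range_add, sum_add_distrib]
  simp only [pow_add, hξ, neg_one_mul]

section Field

variable {K : Type*} [Field K]

theorem inv_one_sub_eq_geom_sum_div {x : K} {N : ℕ} (hx : x ^ N ≠ 1) :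
    (1 - x)⁻¹ = (∑ i ∈ range N, x ^ i) / (1 - x ^ N) := by
  have hxN : 1 - x ^ N ≠ 0 := sub_ne_zero.2 hx.symm
  rw [← mul_neg_geom_sum] at hxN ⊢
  rw [eq_div_iff hxN, inv_mul_cancel_left₀ (left_ne_zero_of_mul hxN)]

theorem inv_one_sub_mul_inv_mul_one_sub_mul {a x : K} (hx : x ≠ 0) (ha : a ^ 2 ≠ 1)
    (h₁ : 1 - a * x ≠ 0) (h₂ : 1 - a * x⁻¹ ≠ 0) :
    ((1 - a * x⁻¹) * (1 - a * x))⁻¹ = ((1 - a * x)⁻¹ + (1 - a * x⁻¹)⁻¹ - 1) / (1 - a ^ 2) := by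
  have h₃ : 1 - a ^ 2 ≠ 0 := sub_ne_zero.2 ha.symm
  have h₁' : 1 - x * a ≠ 0 := by rwa [mul_comm]
  have h₄ : x - a ≠ 0 := fun h ↦ h₂ (by rw [← sub_eq_zero.1 h, mul_inv_cancel₀ hx, sub_self])
  rw [show 1 - a * x⁻¹ = (x - a) / x by field_simp]
  field_simp
  ring

theorem inv_add_one_div_inv_sub_one {x : K} (hx : x ≠ 0) :
    (x⁻¹ + 1) / (x⁻¹ - 1) = -((x + 1) / (x - 1)) := by
  rw [← mul_div_mul_right _ _ hx, add_mul, sub_mul, inv_mul_cancel₀ hx, one_mul, ← neg_sub x 1,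
    div_neg, add_comm]

/-- Closed form of `2 (y^{2n} - 1) ∑_{l<n} ((1 - y⁻¹ ω^{-l}) (1 - y⁻¹ ω^l))⁻¹` for `ω` a primitive
`2n`-th root of unity. -/
def rowSum (n : ℕ) (y : K) : K :=
  2 * n * ((y ^ 2) ^ n + 1) / (1 - (y ^ 2)⁻¹) + 4 * y⁻¹ * ((y ^ 2) ^ n - 1) / (1 - (y ^ 2)⁻¹) ^ 2

namespace IsPrimitiveRoot

theorem pow_eq_neg_one {ξ : K} {m : ℕ} (hξ : IsPrimitiveRoot ξ (2 * m)) (hm : m ≠ 0) :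
    ξ ^ m = -1 :=
  (hξ.pow (by omega) (mul_comm 2 m)).eq_neg_one_of_two_right

theorem geom_sum_pow_eq_zero {ζ : K} {N i : ℕ} (hζ : IsPrimitiveRoot ζ N) (hi0 : i ≠ 0)
    (hi : i < N) : ∑ j ∈ range N, (ζ ^ i) ^ j = 0 := by
  rw [geom_sum_eq (hζ.pow_ne_one_of_pos_of_lt hi0 hi), pow_right_comm, hζ.pow_eq_one, one_pow,
    sub_self, zero_div]

theorem sum_inv_one_sub_mul_pow {ζ : K} {N : ℕ} (hζ : IsPrimitiveRoot ζ N) {a : K}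
    (ha : a ^ N ≠ 1) : ∑ j ∈ range N, (1 - a * ζ ^ j)⁻¹ = N / (1 - a ^ N) := by
  have hN : 0 < N := Nat.pos_of_ne_zero fun h ↦ ha (by rw [h, pow_zero])
  have hterm : ∀ j, (1 - a * ζ ^ j)⁻¹ = (∑ i ∈ range N, a ^ i * (ζ ^ i) ^ j) / (1 - a ^ N) := by
    intro j
    have hpow : (a * ζ ^ j) ^ N = a ^ N := by
      rw [mul_pow, pow_right_comm, hζ.pow_eq_one, one_pow, mul_one]
    rw [inv_one_sub_eq_geom_sum_div (hpow ▸ ha), hpow]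
    simp only [mul_pow, pow_right_comm ζ]
  rw [sum_congr rfl fun j _ ↦ hterm j, ← sum_div, sum_comm]
  simp only [← mul_sum]
  rw [sum_eq_single_of_mem 0 (mem_range.2 hN) fun i hi hi0 ↦ by
    rw [hζ.geom_sum_pow_eq_zero hi0 (mem_range.1 hi), mul_zero]]
  simp

theorem sum_range_inv_one_sub_mul_inv_pow_mul_one_sub_mul_pow {ω : K} {n : ℕ}
    (hω : IsPrimitiveRoot ω (2 * n)) {a : K} (ha2 : a ^ 2 ≠ 1) (ha : a ^ (2 * n) ≠ 1) :
    ∑ l ∈ range n, ((1 - a * ω⁻¹ ^ l) * (1 - a * ω ^ l))⁻¹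
      = (2 * n / (1 - a ^ (2 * n)) - n) / (1 - a ^ 2) + 2 * a / (1 - a ^ 2) ^ 2 := by
  have hn : n ≠ 0 := fun h ↦ ha (by rw [h, mul_zero, pow_zero])
  have hne : ∀ x : K, x ^ (2 * n) = 1 → 1 - a * x ≠ 0 := fun x hx h ↦
    ha (by simpa [mul_pow, hx] using congrArg (· ^ (2 * n)) (sub_eq_zero.1 h).symm)
  have hpf : ∀ l, ((1 - a * ω⁻¹ ^ l) * (1 - a * ω ^ l))⁻¹
      = ((1 - a * ω ^ l)⁻¹ + (1 - a * ω⁻¹ ^ l)⁻¹ - 1) / (1 - a ^ 2) := by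
    intro l
    have h₁ := hne (ω ^ l) (by rw [pow_right_comm, hω.pow_eq_one, one_pow])
    have h₂ := hne (ω⁻¹ ^ l) (by rw [pow_right_comm, hω.inv.pow_eq_one, one_pow])
    rw [inv_pow] at h₂ ⊢
    exact inv_one_sub_mul_inv_mul_one_sub_mul (pow_ne_zero l (hω.ne_zero (by omega))) ha2 h₁ h₂
  have hhalf : ∑ l ∈ range n, ((1 - a * ω ^ l)⁻¹ + (1 - a * ω⁻¹ ^ l)⁻¹)
      = 2 * n / (1 - a ^ (2 * n)) + (1 - a)⁻¹ - (1 + a)⁻¹ := by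
    have h := sum_range_two_mul_pow_add_apply_one hω.pow_eq_one fun x ↦ (1 - a * x)⁻¹
    rw [hω.sum_inv_one_sub_mul_pow ha, mul_one, hω.pow_eq_neg_one hn, mul_neg_one,
      sub_neg_eq_add] at h
    push_cast at h
    linear_combination -h
  have h1 : 1 - a ≠ 0 := fun h ↦ ha2 (by rw [← sub_eq_zero.1 h, one_pow])
  have h2 : 1 + a ≠ 0 := fun h ↦ ha2 (by rw [eq_neg_of_add_eq_zero_right h]; ring)
  have h3 : 1 - a ^ (2 * n) ≠ 0 := sub_ne_zero.2 ha.symm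
  rw [sum_congr rfl fun l _ ↦ hpf l, ← sum_div, sum_sub_distrib, sum_const, card_range,
    nsmul_one, hhalf]
  field_simp
  ring

theorem sum_range_pow_add_one_div_one_sub_inv [CharZero K] {u : K} {m : ℕ}
    (hu : IsPrimitiveRoot u m) (hm : m ≠ 0) (n : ℕ) :
    ∑ k ∈ range m, ((u ^ k) ^ n + 1) / (1 - (u ^ k)⁻¹) = m - 1 - (n % m : ℕ) := by
  set r := n % m
  have hr : r < m := Nat.mod_lt n (Nat.pos_of_ne_zero hm)
  have hterm : ∀ k ∈ (range m).erase 0, ((u ^ k) ^ n + 1) / (1 - (u ^ k)⁻¹)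
      = ∑ t ∈ range (r + 1), (u ^ t) ^ k + (u ^ k + 1) / (u ^ k - 1) := by
    intro k hk
    obtain ⟨hk0, hk⟩ := mem_erase.1 hk
    have hx0 : u ^ k ≠ 0 := pow_ne_zero k (hu.ne_zero hm)
    have hx1 : u ^ k ≠ 1 := hu.pow_ne_one_of_pos_of_lt hk0 (mem_range.1 hk)
    have hx1' : u ^ k - 1 ≠ 0 := sub_ne_zero.2 hx1
    rw [pow_eq_pow_mod n (by rw [pow_right_comm, hu.pow_eq_one, one_pow])]
    simp only [pow_right_comm u _ k]
    rw [geom_sum_eq hx1]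
    field_simp
    ring
  have hgeom : ∑ k ∈ range m, ∑ t ∈ range (r + 1), (u ^ t) ^ k = m := by
    rw [sum_comm, sum_eq_single_of_mem 0 (by simp) fun t ht ht0 ↦
      hu.geom_sum_pow_eq_zero ht0 (by have := mem_range.1 ht; omega)]
    simp
  have hodd : ∑ k ∈ range m, (u ^ k + 1) / (u ^ k - 1) = 0 := by
    have h := sum_range_inv_pow_of_pow_eq_one hu.pow_eq_one fun x ↦ (x + 1) / (x - 1)
    simp only [inv_pow, inv_add_one_div_inv_sub_one (pow_ne_zero _ (hu.ne_zero hm)),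
      sum_neg_distrib] at h
    exact self_eq_neg.1 h.symm
  -- at `k = 0` the left summand is `2 / 0 = 0`, while the right one is `r + 1`
  have hsplit : ∑ k ∈ range m, ((u ^ k) ^ n + 1) / (1 - (u ^ k)⁻¹) + (r + 1)
      = ∑ k ∈ range m, (∑ t ∈ range (r + 1), (u ^ t) ^ k + (u ^ k + 1) / (u ^ k - 1)) := by
    rw [← add_sum_erase _ _ (mem_range.2 (Nat.pos_of_ne_zero hm)),
      ← add_sum_erase _ _ (mem_range.2 (Nat.pos_of_ne_zero hm)), sum_congr rfl hterm]
    simp only [pow_zero, one_pow, inv_one, sub_self, div_zero, zero_add, sum_const, card_range,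
      nsmul_eq_mul, Nat.cast_add, Nat.cast_one, mul_one, add_zero]
    ring
  rw [sum_add_distrib, hgeom, hodd] at hsplit
  linear_combination hsplit

theorem sum_range_two_mul_rowSum [CharZero K] {ξ : K} {m : ℕ}
    (hξ : IsPrimitiveRoot ξ (2 * m)) (hm : m ≠ 0) (n : ℕ) :
    ∑ k ∈ range (2 * m), rowSum n (ξ ^ k) = 4 * (n : K) * (m - 1 - (n % m : ℕ)) := by
  rw [sum_range_two_mul_pow_of_pow_eq_neg_one (hξ.pow_eq_neg_one hm) (rowSum n),
    ← (hξ.pow (by omega) rfl).sum_range_pow_add_one_div_one_sub_inv hm n, mul_sum]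
  refine sum_congr rfl fun k _ ↦ ?_
  simp only [rowSum, neg_sq, inv_neg, pow_right_comm ξ _ 2]
  ring

theorem pow_two_pow_eq_one_iff {ξ : K} {m n : ℕ} (hξ : IsPrimitiveRoot ξ (2 * m))
    (h : m.Coprime n) (k : ℕ) : ((ξ ^ k) ^ 2) ^ n = 1 ↔ m ∣ k := by
  rw [← pow_mul, ← pow_mul, hξ.pow_eq_one_iff_dvd, show k * (2 * n) = 2 * (k * n) by ring,
    Nat.mul_dvd_mul_iff_left two_pos, h.dvd_mul_right]

theorem one_sub_inv_pow_mul_pow_ne_zero {ξ ω : K} {m n : ℕ} (hξ : IsPrimitiveRoot ξ (2 * m))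
    (hω : IsPrimitiveRoot ω (2 * n)) (h : m.Coprime n) {k l : ℕ} (hk0 : k ≠ 0) (hk : k < 2 * m)
    (hl : l < n) : 1 - ξ⁻¹ ^ k * ω ^ l ≠ 0 := by
  rw [sub_ne_zero, ne_comm]
  intro h1
  by_cases hkm : k = m
  · subst hkm
    rw [inv_pow, hξ.pow_eq_neg_one (by omega), inv_neg, inv_one, neg_one_mul, neg_eq_iff_eq_neg,
      ← hω.pow_eq_neg_one (by omega)] at h1
    exact absurd (hω.pow_inj (by omega) (by omega) h1) (by omega)
  · refine hkm (Nat.eq_of_dvd_of_lt_two_mul hk0 ((hξ.pow_two_pow_eq_one_iff h k).1 ?_) hk)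
    rw [inv_pow, inv_mul_eq_one₀ (pow_ne_zero k (hξ.ne_zero (by omega)))] at h1
    rw [← pow_mul, h1, pow_right_comm, hω.pow_eq_one, one_pow]

theorem mul_sum_inv_eq_rowSum {ξ ω : K} {m n : ℕ} (hξ : IsPrimitiveRoot ξ (2 * m))
    (hm : m ≠ 0) (hω : IsPrimitiveRoot ω (2 * n)) (h : m.Coprime n) (k : ℕ) :
    2 * (ξ ^ (2 * n * k) - 1) * ∑ l ∈ range n, ((1 - ξ⁻¹ ^ k * ω⁻¹ ^ l) * (1 - ξ⁻¹ ^ k * ω ^ l))⁻¹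
      = rowSum n (ξ ^ k) := by
  rw [show ξ ^ (2 * n * k) = ((ξ ^ k) ^ 2) ^ n by ring, inv_pow]
  by_cases hk : m ∣ k
  · -- both sides vanish, the right one because `1 / (1 - 1) = 0`
    have hy2 : (ξ ^ k) ^ 2 = 1 := by
      simpa using (hξ.pow_two_pow_eq_one_iff (Nat.coprime_one_right m) k).2 hk
    simp [rowSum, hy2]
  · set y := ξ ^ k
    have hy0 : y ≠ 0 := pow_ne_zero k (hξ.ne_zero (by omega))
    have hc : (y ^ 2) ^ n ≠ 1 := mt (hξ.pow_two_pow_eq_one_iff h k).1 hk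
    have hy2 : y ^ 2 ≠ 1 := fun hy ↦ hc (by rw [hy, one_pow])
    rw [hω.sum_range_inv_one_sub_mul_inv_pow_mul_one_sub_mul_pow (by rwa [inv_pow, inv_ne_one])
      (by rwa [inv_pow, pow_mul, inv_ne_one])]
    have hc₁ : y ^ (2 * n) - 1 ≠ 0 := by rw [pow_mul]; exact sub_ne_zero.2 hc
    simp only [rowSum, inv_pow, ← pow_mul]
    field_simp
    ring

end IsPrimitiveRoot

end Field

theorem isPrimitiveRoot_zeta {N : ℕ} (hN : N ≠ 0) : IsPrimitiveRoot (zeta N) N := by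
  simpa [zeta] using Complex.isPrimitiveRoot_exp N hN

/-- Let `1 ≤ m < n` be integers with `gcd(m, n) = 1` and let
`r := n mod m` (so `0 ≤ r ≤ m - 1`).  Then all the denominators below are nonzero and
`∑_{l=0}^{n-1} ∑_{k=1}^{2m-1} 2(ζ_{2m}^{2nk} - 1) / ((1 - ζ_{2m}^{-k} ζ_{2n}^{-l})(1 - ζ_{2m}^{-k} ζ_{2n}^{l})) = 4mn - 4n(r + 1)`. -/
theorem stmt_4 (m n : ℕ) (hm : 1 ≤ m) (hmn : m < n) (hgcd : Nat.gcd m n = 1) :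
    (∀ l ∈ Finset.range n, ∀ k ∈ Finset.Icc 1 (2 * m - 1),
        (1 : ℂ) - (zeta (2 * m))⁻¹ ^ k * (zeta (2 * n))⁻¹ ^ l ≠ 0 ∧
        (1 : ℂ) - (zeta (2 * m))⁻¹ ^ k * zeta (2 * n) ^ l ≠ 0) ∧
    ∑ l ∈ Finset.range n, ∑ k ∈ Finset.Icc 1 (2 * m - 1),
        2 * (zeta (2 * m) ^ (2 * n * k) - 1) /
          ((1 - (zeta (2 * m))⁻¹ ^ k * (zeta (2 * n))⁻¹ ^ l) *
            (1 - (zeta (2 * m))⁻¹ ^ k * zeta (2 * n) ^ l))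
      = 4 * (m : ℂ) * n - 4 * (n : ℂ) * ((n % m : ℕ) + 1) := by
  have hξ : IsPrimitiveRoot (zeta (2 * m)) (2 * m) := isPrimitiveRoot_zeta (by omega)
  have hω : IsPrimitiveRoot (zeta (2 * n)) (2 * n) := isPrimitiveRoot_zeta (by omega)
  refine ⟨fun l hl k hk ↦ ?_, ?_⟩
  · rw [mem_range] at hl
    rw [mem_Icc] at hk
    exact ⟨hξ.one_sub_inv_pow_mul_pow_ne_zero hω.inv hgcd (by omega) (by omega) hl,
      hξ.one_sub_inv_pow_mul_pow_ne_zero hω hgcd (by omega) (by omega) hl⟩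
  have hIcc : Icc 1 (2 * m - 1) = (range (2 * m)).erase 0 := by
    ext k
    simp only [mem_Icc, mem_erase, mem_range]
    omega
  calc _ = ∑ k ∈ range (2 * m), 2 * (zeta (2 * m) ^ (2 * n * k) - 1) *
          ∑ l ∈ range n, ((1 - (zeta (2 * m))⁻¹ ^ k * (zeta (2 * n))⁻¹ ^ l) *
            (1 - (zeta (2 * m))⁻¹ ^ k * zeta (2 * n) ^ l))⁻¹ := by
        rw [sum_comm, hIcc, sum_erase _ (by simp)]
        simp only [div_eq_mul_inv, mul_sum]
    _ = ∑ k ∈ range (2 * m), rowSum n (zeta (2 * m) ^ k) :=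
        sum_congr rfl fun k _ ↦ hξ.mul_sum_inv_eq_rowSum (by omega) hω hgcd k
    _ = 4 * (n : ℂ) * (m - 1 - (n % m : ℕ)) := hξ.sum_range_two_mul_rowSum (by omega) n
    _ = _ := by ring
end

section
/- Let m ≥ 1 be an odd integer and let n ≥ 1 be an integer. Then all the denominators below are nonzero and ∑_{l=0}^{n−1} ∑_{k=0}^{2m−1} 2((−1)^n ζ_{2m}^{2nk} − 1) / (1 + ζ_{2m}^{−2k}) = 2mn((−1)^{⌊n/m⌋} − 1). -/
/-- Let `m ≥ 1` be odd and `n ≥ 1` an integer.  Then all the denominators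
below are nonzero and
`∑_{l=0}^{n-1} ∑_{k=0}^{2m-1} 2((-1)^n ζ_{2m}^{2nk} - 1) / (1 + ζ_{2m}^{-2k}) = 2mn((-1)^{⌊n/m⌋} - 1)`. -/
theorem stmt_5 (m n : ℕ) (hm : Odd m) (hm1 : 1 ≤ m) (hn : 1 ≤ n) :
    (∀ k ∈ Finset.range (2 * m), (1 : ℂ) + (zeta (2 * m))⁻¹ ^ (2 * k) ≠ 0) ∧
    ∑ l ∈ Finset.range n, ∑ k ∈ Finset.range (2 * m),
        2 * ((-1 : ℂ) ^ n * zeta (2 * m) ^ (2 * n * k) - 1) / (1 + (zeta (2 * m))⁻¹ ^ (2 * k))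
      = 2 * (m : ℂ) * n * ((-1 : ℂ) ^ (n / m) - 1) := by
  have hm0 : m ≠ 0 := by omega
  haveI : NeZero m := ⟨hm0⟩
  have h2m0 : (2 * m) ≠ 0 := by omega
  have hζ : IsPrimitiveRoot (zeta (2 * m)) (2 * m) := by
    have := Complex.isPrimitiveRoot_exp (2 * m) h2m0
    simpa [zeta] using this
  set ω : ℂ := zeta (2 * m) ^ 2 with hωdef
  have hωm : ω ^ m = 1 := by rw [hωdef, ← pow_mul]; exact hζ.pow_eq_one
  have hωprim : IsPrimitiveRoot ω m := hζ.pow (by omega) rfl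
  -- nonvanishing of denominators
  have hne : ∀ k : ℕ, (1 : ℂ) + (zeta (2 * m))⁻¹ ^ (2 * k) ≠ 0 := by
    intro k h
    have hpow : ((zeta (2 * m))⁻¹ ^ (2 * k)) ^ m = 1 := by
      rw [inv_pow, inv_pow, ← pow_mul, show 2 * k * m = 2 * m * k by ring, pow_mul,
        hζ.pow_eq_one, one_pow, inv_one]
    rw [eq_neg_of_add_eq_zero_right h, hm.neg_one_pow] at hpow
    norm_num at hpow
  refine ⟨fun k _ => hne k, ?_⟩
  -- rewrite each term of the inner sum
  have key : ∀ k ∈ Finset.range (2 * m),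
      2 * ((-1 : ℂ) ^ n * zeta (2 * m) ^ (2 * n * k) - 1) / (1 + (zeta (2 * m))⁻¹ ^ (2 * k))
      = ∑ j ∈ Finset.range m,
          (-1 : ℂ) ^ j * ((-1 : ℂ) ^ n * (ω ^ (n + (m - 1) * j)) ^ k - (ω ^ ((m - 1) * j)) ^ k) := by
    intro k _
    have hu : (zeta (2 * m))⁻¹ ^ (2 * k) = ω ^ ((m - 1) * k) := by
      have h1 : ω ^ ((m - 1) * k) * ω ^ k = 1 := by
        rw [← pow_add, show (m - 1) * k + k = m * k by
          · have : m - 1 + 1 = m := by omega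
            calc (m-1)*k + k = (m-1+1)*k := by ring
            _ = m * k := by rw [this]]
        rw [pow_mul, hωm, one_pow]
      have h2 : ω ^ ((m - 1) * k) = (ω ^ k)⁻¹ := eq_inv_of_mul_eq_one_left h1
      rw [h2, inv_pow, hωdef, ← pow_mul, mul_comm 2 k, pow_mul]
    have hζ2 : zeta (2 * m) ^ (2 * n * k) = ω ^ (n * k) := by
      rw [hωdef, ← pow_mul]; congr 1; ring
    rw [div_eq_iff (hne k), hu, hζ2]
    set u : ℂ := ω ^ ((m - 1) * k) with hudef
    have hum : u ^ m = 1 := by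
      rw [hudef, ← pow_mul, show (m - 1) * k * m = m * ((m - 1) * k) by ring, pow_mul, hωm, one_pow]
    have hgeo : (∑ j ∈ Finset.range m, (-u) ^ j) * (1 + u) = 2 := by
      have h := geom_sum_mul (-u) m
      have hnu : (-u) ^ m = -1 := by rw [neg_pow, hum, hm.neg_one_pow]; ring
      rw [hnu] at h
      linear_combination -h
    have expand : ∀ j ∈ Finset.range m,
        (-1 : ℂ) ^ j * ((-1 : ℂ) ^ n * (ω ^ (n + (m - 1) * j)) ^ k - (ω ^ ((m - 1) * j)) ^ k)
        = ((-1 : ℂ) ^ n * ω ^ (n * k) - 1) * (-u) ^ j := by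
      intro j _
      have e1 : (ω ^ (n + (m - 1) * j)) ^ k = ω ^ (n * k) * ω ^ ((m - 1) * k * j) := by
        rw [← pow_mul, ← pow_add]; congr 1; ring
      have e2 : (ω ^ ((m - 1) * j)) ^ k = ω ^ ((m - 1) * k * j) := by
        rw [← pow_mul]; congr 1; ring
      have e3 : (-u) ^ j = (-1 : ℂ) ^ j * ω ^ ((m - 1) * k * j) := by
        rw [hudef, ← neg_one_mul, mul_pow, ← pow_mul]
      rw [e1, e2, e3]
      ring
    rw [Finset.sum_congr rfl expand, ← Finset.mul_sum]
    linear_combination (1 - (-1 : ℂ) ^ n * ω ^ (n * k)) * hgeo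
  -- geometric sums
  have Gsum : ∀ c : ℕ, ∑ k ∈ Finset.range (2 * m), (ω ^ c) ^ k
      = if m ∣ c then ((2 * m : ℕ) : ℂ) else 0 := by
    intro c
    by_cases h : m ∣ c
    · obtain ⟨d, rfl⟩ := h
      rw [pow_mul, hωm, one_pow, if_pos (dvd_mul_right m d)]
      simp
    · have hne1 : ω ^ c ≠ 1 := fun hc => h ((hωprim.pow_eq_one_iff_dvd c).1 hc)
      have hc2m : (ω ^ c) ^ (2 * m) = 1 := by
        rw [← pow_mul, show c * (2 * m) = m * (2 * c) by ring, pow_mul, hωm, one_pow]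
      rw [geom_sum_eq hne1, hc2m]
      simp [h]
  -- divisibility conditions
  have cond1 : ∀ j : ℕ, j < m → ((m ∣ n + (m - 1) * j) ↔ j = n % m) := by
    intro j hj
    rw [← ZMod.natCast_eq_zero_iff _ m]
    push_cast [Nat.cast_sub hm1]
    rw [ZMod.natCast_self]
    constructor
    · intro h
      have hjn : (j : ZMod m) = ((n % m : ℕ) : ZMod m) := by
        rw [ZMod.natCast_mod]
        linear_combination -h
      have := congrArg ZMod.val hjn
      rwa [ZMod.val_cast_of_lt hj, ZMod.val_cast_of_lt (Nat.mod_lt n (by omega))] at this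
    · rintro rfl
      rw [ZMod.natCast_mod]
      ring
  have cond2 : ∀ j : ℕ, j < m → ((m ∣ (m - 1) * j) ↔ j = 0) := by
    intro j hj
    constructor
    · intro h
      have h2 : m ∣ m * j - (m - 1) * j := Nat.dvd_sub (dvd_mul_right m j) h
      rw [← Nat.sub_mul, show m - (m - 1) = 1 by omega, one_mul] at h2
      exact Nat.eq_zero_of_dvd_of_lt h2 hj
    · rintro rfl; simp
  -- compute the inner sum
  have inner : ∑ k ∈ Finset.range (2 * m),
      2 * ((-1 : ℂ) ^ n * zeta (2 * m) ^ (2 * n * k) - 1) / (1 + (zeta (2 * m))⁻¹ ^ (2 * k))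
      = 2 * (m : ℂ) * ((-1 : ℂ) ^ (n + n % m) - 1) := by
    rw [Finset.sum_congr rfl key, Finset.sum_comm]
    have step : ∀ j ∈ Finset.range m,
        ∑ k ∈ Finset.range (2 * m),
          (-1 : ℂ) ^ j * ((-1 : ℂ) ^ n * (ω ^ (n + (m - 1) * j)) ^ k - (ω ^ ((m - 1) * j)) ^ k)
        = (if j = n % m then (-1 : ℂ) ^ j * (-1 : ℂ) ^ n * (2 * (m : ℂ)) else 0)
          - (if j = 0 then (-1 : ℂ) ^ j * (2 * (m : ℂ)) else 0) := by
      intro j hj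
      rw [Finset.mem_range] at hj
      rw [← Finset.mul_sum, Finset.sum_sub_distrib, ← Finset.mul_sum, Gsum, Gsum,
        if_congr (cond1 j hj) rfl rfl, if_congr (cond2 j hj) rfl rfl]
      push_cast
      split_ifs <;> ring
    rw [Finset.sum_congr rfl step, Finset.sum_sub_distrib,
      Finset.sum_ite_eq' (Finset.range m) (n % m)
        (fun j => (-1 : ℂ) ^ j * (-1 : ℂ) ^ n * (2 * (m : ℂ))),
      Finset.sum_ite_eq' (Finset.range m) 0 (fun j => (-1 : ℂ) ^ j * (2 * (m : ℂ))),
      if_pos (Finset.mem_range.2 (Nat.mod_lt n (by omega))),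
      if_pos (Finset.mem_range.2 (by omega)), pow_add]
    ring
  rw [Finset.sum_congr rfl (fun l _ => inner), Finset.sum_const, Finset.card_range,
    nsmul_eq_mul]
  have hpow : ((-1 : ℂ)) ^ (n + n % m) = (-1 : ℂ) ^ (n / m) := by
    have hn' : n = m * (n / m) + n % m := (Nat.div_add_mod n m).symm
    set q := n / m with hq
    set r := n % m with hr
    rw [hn', show m * q + r + r = m * q + 2 * r by ring,
      pow_add, pow_mul, pow_mul, hm.neg_one_pow]
    simp
  rw [hpow]
  ring
end

section
/- Let m ≥ 2 be even and let n ≥ 1 be an integer. Then all the denominators below are nonzero and ∑_{l=0}^{n−1} ∑_{k=0}^{2m−1} 2((−1)^n ζ_{2m}^{n(2k+1)} − 1) / (1 + ζ_{2m}^{−(2k+1)}) = 2mn((−1)^{⌊n/m⌋} − 1). -/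
/-- Let `m ≥ 2` be even and `n ≥ 1` an integer.  Then all the denominators
below are nonzero and
`∑_{l=0}^{n-1} ∑_{k=0}^{2m-1} 2((-1)^n ζ_{2m}^{n(2k+1)} - 1) / (1 + ζ_{2m}^{-(2k+1)}) = 2mn((-1)^{⌊n/m⌋} - 1)`. -/
theorem stmt_8 (m n : ℕ) (hm : Even m) (hm2 : 2 ≤ m) (hn : 1 ≤ n) :
    (∀ k ∈ Finset.range (2 * m), (1 : ℂ) + (zeta (2 * m))⁻¹ ^ (2 * k + 1) ≠ 0) ∧
    ∑ l ∈ Finset.range n, ∑ k ∈ Finset.range (2 * m),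
        2 * ((-1 : ℂ) ^ n * zeta (2 * m) ^ (n * (2 * k + 1)) - 1) /
          (1 + (zeta (2 * m))⁻¹ ^ (2 * k + 1))
      = 2 * (m : ℂ) * n * ((-1 : ℂ) ^ (n / m) - 1) := by
  have hm0 : (2 * m : ℕ) ≠ 0 := by omega
  have hz : IsPrimitiveRoot (zeta (2 * m)) (2 * m) := by
    simpa [zeta] using Complex.isPrimitiveRoot_exp (2 * m) hm0
  set z := zeta (2 * m) with hzdef
  have hz0 : z ≠ 0 := hz.ne_zero hm0
  have hz1 : z ^ (2 * m) = 1 := hz.pow_eq_one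
  -- z^m = -1
  have hzm : z ^ m = -1 := by
    have h2 : (z ^ m) * (z ^ m) = 1 := by
      rw [← pow_add]
      rw [show m + m = 2 * m from by ring]
      exact hz1
    rcases mul_self_eq_one_iff.mp h2 with h | h
    · exact absurd h (hz.pow_ne_one_of_pos_of_lt (by omega) (by omega))
    · exact h
  -- z^(2k+1) is never -1 (since m is even)
  have hw : ∀ k : ℕ, z ^ (2 * k + 1) ≠ -1 := by
    intro k hk
    have h2 : z ^ (2 * (2 * k + 1)) = 1 := by
      rw [two_mul, pow_add, hk]; ring
    obtain ⟨c, hc⟩ := (hz.pow_eq_one_iff_dvd _).mp h2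
    obtain ⟨r, hr⟩ := hm
    have h3 : 2 * (2 * k + 1) = 2 * (m * c) := hc.trans (by ring)
    have h4 : 2 * k + 1 = m * c := Nat.eq_of_mul_eq_mul_left two_pos h3
    have h5 : 2 * k + 1 = 2 * (r * c) := by rw [h4, hr]; ring
    omega
  -- denominators are nonzero
  have hden : ∀ k : ℕ, (1 : ℂ) + z⁻¹ ^ (2 * k + 1) ≠ 0 := by
    intro k h
    apply hw k
    have h1 : (z ^ (2 * k + 1))⁻¹ = -1 := by
      rw [← inv_pow]; linear_combination h
    rw [inv_eq_iff_eq_inv, show ((-1 : ℂ))⁻¹ = -1 from by norm_num] at h1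
    exact h1
  refine ⟨fun k _ => hden k, ?_⟩
  -- per-term rewriting into a geometric sum
  have hterm : ∀ k : ℕ,
      2 * ((-1 : ℂ) ^ n * z ^ (n * (2 * k + 1)) - 1) / (1 + z⁻¹ ^ (2 * k + 1))
        = 2 * ∑ j ∈ Finset.range n, (-(z ^ (2 * k + 1))) ^ (j + 1) := by
    intro k
    have hw0 : z ^ (2 * k + 1) ≠ 0 := pow_ne_zero _ hz0
    have hwne : z ^ (2 * k + 1) ≠ -1 := hw k
    have hne1 : -(z ^ (2 * k + 1)) ≠ 1 := by
      intro h; exact hwne (by linear_combination -h)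
    have hw1 : z ^ (2 * k + 1) + 1 ≠ 0 := by
      intro h; exact hwne (by linear_combination h)
    have hs : ∑ j ∈ Finset.range n, (-(z ^ (2 * k + 1))) ^ (j + 1)
        = (-(z ^ (2 * k + 1))) * (((-(z ^ (2 * k + 1))) ^ n - 1) / (-(z ^ (2 * k + 1)) - 1)) := by
      rw [← geom_sum_eq hne1, Finset.mul_sum]
      exact Finset.sum_congr rfl fun j _ => by rw [pow_succ']
    rw [hs]
    have hnum : (-1 : ℂ) ^ n * z ^ (n * (2 * k + 1)) = (-(z ^ (2 * k + 1))) ^ n := by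
      rw [neg_pow (z ^ (2 * k + 1)) n, ← pow_mul, mul_comm (2 * k + 1) n]
    rw [hnum]
    have hd1 : -(z ^ (2 * k + 1)) - 1 ≠ 0 := sub_ne_zero.mpr hne1
    have hrw : (1 : ℂ) + z⁻¹ ^ (2 * k + 1) = (z ^ (2 * k + 1) + 1) / z ^ (2 * k + 1) := by
      rw [inv_pow]; field_simp
    rw [hrw]
    rw [div_div_eq_mul_div]
    field_simp
    ring
  -- the inner sum over k for each power j+1
  have hbase : ∀ k : ℕ, (-(z ^ (2 * k + 1))) ^ m = -1 := by
    intro k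
    rw [neg_pow, hm.neg_one_pow, one_mul, pow_right_comm, hzm]
    exact Odd.neg_one_pow ⟨k, rfl⟩
  have hinner : ∀ j : ℕ,
      ∑ k ∈ Finset.range (2 * m), (-(z ^ (2 * k + 1))) ^ (j + 1)
        = if m ∣ (j + 1) then (2 * m : ℂ) * (-1) ^ ((j + 1) / m) else 0 := by
    intro j
    by_cases hdvd : m ∣ (j + 1)
    · obtain ⟨t, ht⟩ := hdvd
      rw [if_pos ⟨t, ht⟩]
      have hterm' : ∀ k : ℕ, (-(z ^ (2 * k + 1))) ^ (j + 1) = (-1 : ℂ) ^ t := by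
        intro k
        rw [ht, pow_mul, hbase k]
      rw [Finset.sum_congr rfl fun k _ => hterm' k, Finset.sum_const, Finset.card_range]
      have hq : (j + 1) / m = t := by
        rw [ht, Nat.mul_div_cancel_left _ (by omega : 0 < m)]
      rw [hq, nsmul_eq_mul]
      push_cast
      ring
    · rw [if_neg hdvd]
      have hu1 : z ^ (2 * (j + 1)) ≠ 1 := by
        intro h
        obtain ⟨c, hc⟩ := (hz.pow_eq_one_iff_dvd _).mp h
        have h3 : 2 * (j + 1) = 2 * (m * c) := hc.trans (by ring)
        exact hdvd ⟨c, Nat.eq_of_mul_eq_mul_left two_pos h3⟩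
      have hsplit : ∑ k ∈ Finset.range (2 * m), (-(z ^ (2 * k + 1))) ^ (j + 1)
          = ((-1 : ℂ) ^ (j + 1) * z ^ (j + 1)) *
              ∑ k ∈ Finset.range (2 * m), (z ^ (2 * (j + 1))) ^ k := by
        rw [Finset.mul_sum]
        refine Finset.sum_congr rfl fun k _ => ?_
        rw [neg_pow, ← pow_mul, ← pow_mul,
          show (2 * k + 1) * (j + 1) = (j + 1) + 2 * (j + 1) * k from by ring, pow_add]
        ring
      rw [hsplit, geom_sum_eq hu1]
      rw [pow_right_comm, hz1, one_pow]
      simp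
  -- summing the indicator over j
  have hsum2 : ∀ N : ℕ,
      (∑ j ∈ Finset.range N, if m ∣ (j + 1) then (2 * m : ℂ) * (-1) ^ ((j + 1) / m) else 0)
        = (m : ℂ) * ((-1) ^ (N / m) - 1) := by
    intro N
    induction N with
    | zero => simp
    | succ N ih =>
      rw [Finset.sum_range_succ, ih]
      by_cases hd : m ∣ (N + 1)
      · rw [if_pos hd]
        rw [show (N + 1) / m = N / m + 1 from by rw [Nat.succ_div, if_pos hd]]
        rw [pow_succ]
        ring
      · rw [if_neg hd]
        rw [show (N + 1) / m = N / m from by rw [Nat.succ_div, if_neg hd]; omega]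
        ring
  -- assemble
  have hk : ∀ l : ℕ, ∑ k ∈ Finset.range (2 * m),
      2 * ((-1 : ℂ) ^ n * z ^ (n * (2 * k + 1)) - 1) / (1 + z⁻¹ ^ (2 * k + 1))
        = 2 * ((m : ℂ) * ((-1) ^ (n / m) - 1)) := by
    intro l
    rw [Finset.sum_congr rfl fun k _ => hterm k, ← Finset.mul_sum, Finset.sum_comm]
    rw [Finset.sum_congr rfl fun j _ => hinner j, hsum2 n]
  rw [Finset.sum_congr rfl fun l _ => hk l, Finset.sum_const, Finset.card_range,
    nsmul_eq_mul]
  ring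
end

section
/- Let m and n be positive integers with m < n and gcd(m, n) = 1, and set δ := ⌊n/m⌋ and r := n − δm. For each integer s ≥ 1 let j_s be the unique integer with 0 ≤ j_s ≤ n − 1 and s + [s]_{2m} + 2m·j_s ≡ 0 (mod 2n). Then ∑_{s=1}^{2δm} ([s]_{2m} + 2m·j_s) = δm(2nm + 2r − 1). -/
/-- Let `m, n` be positive integers with `m < n` and `gcd(m, n) = 1`,
and set `δ := ⌊n/m⌋` and `r := n - δm`.  For each integer `s ≥ 1` let `j s` be the unique
integer with `0 ≤ j s ≤ n - 1` and `s + [s]_{2m} + 2m·(j s) ≡ 0 (mod 2n)`.  Then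
`∑_{s=1}^{2δm} ([s]_{2m} + 2m·(j s)) = δm(2nm + 2r - 1)`. -/
theorem stmt_11 (m n : ℕ) (hm : 1 ≤ m) (hmn : m < n) (hgcd : Nat.gcd m n = 1)
    (j : ℕ → ℕ)
    (hj : ∀ s, 1 ≤ s → j s ≤ n - 1 ∧ (s + s % (2 * m) + 2 * m * j s) % (2 * n) = 0) :
    ∑ s ∈ Finset.Icc 1 (2 * (n / m) * m), (s % (2 * m) + 2 * m * j s)
      = (n / m) * m * (2 * n * m + 2 * (n - (n / m) * m) - 1) := by
  classical
  set D := n / m with hD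
  have hn : 1 ≤ n := le_of_lt (lt_of_le_of_lt hm hmn)
  have hDm : D * m ≤ n := by rw [hD]; exact Nat.div_mul_le_self n m
  -- the quotient K s
  set K : ℕ → ℕ := fun s => (s + s % (2 * m) + 2 * m * j s) / (2 * n) with hKdef
  have hK : ∀ s, 1 ≤ s → s ≤ 2 * n →
      2 * n * K s = s + s % (2 * m) + 2 * m * j s ∧ 1 ≤ K s ∧ K s ≤ m := by
    intro s hs1 hs2
    obtain ⟨hjb, hmod⟩ := hj s hs1
    have hdvd : 2 * n ∣ s + s % (2 * m) + 2 * m * j s := Nat.dvd_of_mod_eq_zero hmod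
    have heq : 2 * n * K s = s + s % (2 * m) + 2 * m * j s := by
      rw [hKdef]; exact Nat.mul_div_cancel' hdvd
    have hsm : s % (2 * m) < 2 * m := Nat.mod_lt _ (by omega)
    have hjn : j s + 1 ≤ n := by omega
    have hub : s + s % (2 * m) + 2 * m * j s < 2 * n * (m + 1) := by
      have h1 : 2 * m * j s ≤ 2 * m * (n - 1) := Nat.mul_le_mul_left _ (by omega)
      have h2 : 2 * m * (n - 1) + 2 * m = 2 * m * n := by
        have : n - 1 + 1 = n := by omega
        calc 2 * m * (n - 1) + 2 * m = 2 * m * ((n - 1) + 1) := by ring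
        _ = 2 * m * n := by rw [this]
      nlinarith
    refine ⟨heq, ?_, ?_⟩
    · by_contra h
      have : K s = 0 := by omega
      rw [this, Nat.mul_zero] at heq
      omega
    · have : 2 * n * K s < 2 * n * (m + 1) := by rw [heq]; exact hub
      have := Nat.lt_of_mul_lt_mul_left this
      omega
  -- injectivity of K on each block of m consecutive values
  have hinj : ∀ a : ℕ, a * m + m ≤ 2 * n →
      Set.InjOn K (Finset.Ioc (a * m) (a * m + m)) := by
    intro a ha s1 hs1 s2 hs2 hks
    simp only [Finset.coe_Ioc, Set.mem_Ioc] at hs1 hs2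
    have h1 := hK s1 (by omega) (by omega)
    have h2 := hK s2 (by omega) (by omega)
    have e : s1 + s1 % (2 * m) + 2 * m * j s1 = s2 + s2 % (2 * m) + 2 * m * j s2 := by
      rw [← h1.1, ← h2.1, hks]
    have q1 := Nat.mod_add_div s1 (2 * m)
    have q2 := Nat.mod_add_div s2 (2 * m)
    -- derive m ∣ (s1 - s2) over ℤ
    have hd : (m : ℤ) ∣ ((s1 : ℤ) - s2) := by
      refine ⟨(j s2 : ℤ) - (s2 / (2 * m) : ℕ) - (j s1 : ℤ) + (s1 / (2 * m) : ℕ), ?_⟩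
      have e' : (s1 : ℤ) + (s1 % (2 * m) : ℕ) + 2 * m * (j s1 : ℕ)
          = (s2 : ℤ) + (s2 % (2 * m) : ℕ) + 2 * m * (j s2 : ℕ) := by exact_mod_cast e
      have q1' : ((s1 % (2 * m) : ℕ) : ℤ) + 2 * m * ((s1 / (2 * m) : ℕ) : ℤ) = s1 := by
        exact_mod_cast q1
      have q2' : ((s2 % (2 * m) : ℕ) : ℤ) + 2 * m * ((s2 / (2 * m) : ℕ) : ℤ) = s2 := by
        exact_mod_cast q2
      linarith [e', q1', q2']
    have habs : |(s1 : ℤ) - s2| < m := by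
      rw [abs_lt]
      constructor <;> [skip; skip] <;>
        · have := hs1.1; have := hs1.2; have := hs2.1; have := hs2.2
          push_cast; omega
    have := Int.eq_zero_of_abs_lt_dvd hd habs
    omega
  -- sum of K over each block equals the sum of 1..m
  have hblock : ∀ a : ℕ, a * m + m ≤ 2 * n →
      ∑ s ∈ Finset.Ioc (a * m) (a * m + m), K s = ∑ k ∈ Finset.Ioc 0 m, k := by
    intro a ha
    have hmaps : ∀ s ∈ Finset.Ioc (a * m) (a * m + m), K s ∈ Finset.Ioc 0 m := by
      intro s hs
      simp only [Finset.mem_Ioc] at hs ⊢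
      have := hK s (by omega) (by omega)
      omega
    have hsub : Finset.image K (Finset.Ioc (a * m) (a * m + m)) ⊆ Finset.Ioc 0 m := by
      intro k hk
      obtain ⟨s, hs, rfl⟩ := Finset.mem_image.mp hk
      exact hmaps s hs
    have hcard : (Finset.Ioc 0 m).card ≤
        (Finset.image K (Finset.Ioc (a * m) (a * m + m))).card := by
      rw [Finset.card_image_of_injOn (hinj a ha)]
      simp [Nat.card_Ioc]
    have himg := Finset.eq_of_subset_of_card_le hsub hcard
    calc ∑ s ∈ Finset.Ioc (a * m) (a * m + m), K s
        = ∑ k ∈ Finset.image K (Finset.Ioc (a * m) (a * m + m)), k := by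
          rw [Finset.sum_image (fun x hx y hy h => hinj a ha hx hy h)]
      _ = ∑ k ∈ Finset.Ioc 0 m, k := by rw [himg]
  -- total sum of K
  have h2Dm : 2 * D * m ≤ 2 * n := by rw [Nat.mul_assoc]; omega
  have hsumK : ∀ a : ℕ, a ≤ 2 * D →
      ∑ s ∈ Finset.Ioc 0 (a * m), K s = a * (∑ k ∈ Finset.Ioc 0 m, k) := by
    intro a
    induction a with
    | zero => simp
    | succ a ih =>
      intro ha
      have h1 : a * m ≤ (a + 1) * m := by nlinarith
      have h2 : (a + 1) * m ≤ 2 * n := by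
        calc (a + 1) * m ≤ 2 * D * m := Nat.mul_le_mul_right _ ha
          _ ≤ 2 * n := h2Dm
      rw [← Finset.sum_Ioc_consecutive K (Nat.zero_le (a * m)) h1, ih (by omega)]
      have h3 : (a + 1) * m = a * m + m := by ring
      rw [h3, hblock a (by omega)]
      ring
  -- main computation
  have hIcc : Finset.Icc 1 (2 * D * m) = Finset.Ioc 0 (2 * D * m) := Finset.Icc_add_one_left_eq_Ioc 0 _
  set N := 2 * D * m with hN
  set A := ∑ s ∈ Finset.Ioc 0 N, (s % (2 * m) + 2 * m * j s) with hA
  set B := ∑ s ∈ Finset.Ioc 0 N, s with hB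
  set G := ∑ k ∈ Finset.Ioc 0 m, k with hG
  have hAB : A + B = 2 * n * (2 * D * G) := by
    have : A + B = ∑ s ∈ Finset.Ioc 0 N, (2 * n * K s) := by
      rw [hA, hB, ← Finset.sum_add_distrib]
      apply Finset.sum_congr rfl
      intro s hs
      simp only [Finset.mem_Ioc] at hs
      have := (hK s (by omega) (by omega)).1
      omega
    rw [this]
    rw [← Finset.mul_sum]
    have := hsumK (2 * D) le_rfl
    rw [show 2 * D * m = N from rfl] at this
    rw [this, hG]
  -- Gauss sums
  have hIocRange : ∀ M : ℕ, ∑ k ∈ Finset.Ioc 0 M, k = ∑ k ∈ Finset.range (M + 1), k := by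
    intro M
    have h0 : Finset.range (M + 1) = insert 0 (Finset.Ioc 0 M) := by
      ext x
      simp only [Finset.mem_range, Finset.mem_insert, Finset.mem_Ioc]
      omega
    rw [h0, Finset.sum_insert (by simp)]
    simp
  have hG2 : G * 2 = m * (m + 1) := by
    rw [hG, hIocRange m, Finset.sum_range_id_mul_two]
    simp [Nat.mul_comm]
  have hB2 : B * 2 = N * (N + 1) := by
    rw [hB, hIocRange N, Finset.sum_range_id_mul_two]
    simp [Nat.mul_comm]
  -- finish with integer arithmetic
  rw [hIcc]
  rw [show (∑ s ∈ Finset.Ioc 0 (2 * D * m), (s % (2 * m) + 2 * m * j s)) = A from rfl]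
  have hnm1 : 1 ≤ 2 * n * m := by nlinarith
  have hc1 : 1 ≤ 2 * n * m + 2 * (n - D * m) := le_trans hnm1 (Nat.le_add_right _ _)
  zify [hDm, hc1]
  have hAB' : (A : ℤ) + B = 2 * n * (2 * D * G) := by exact_mod_cast hAB
  have hG2' : (G : ℤ) * 2 = m * (m + 1) := by exact_mod_cast hG2
  have hB2' : (B : ℤ) * 2 = N * (N + 1) := by exact_mod_cast hB2
  have hN' : (N : ℤ) = 2 * D * m := by exact_mod_cast hN
  have key : (A : ℤ) * 2 = (↑D * ↑m * (2 * ↑n * ↑m + 2 * (↑n - ↑D * ↑m) - 1)) * 2 := by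
    rw [hN'] at hB2'
    linear_combination 2 * hAB' + 4 * (n : ℤ) * (D : ℤ) * hG2' - hB2'
  linarith
end

section
/- Let m ≥ 2 and n be positive integers with m < n and gcd(m, n) = 1, and set δ := ⌊n/m⌋ and r := n − δm (so 1 ≤ r ≤ m − 1). For each integer s ≥ 1 let j_s be the unique integer with 0 ≤ j_s ≤ n − 1 and s + [s]_{2m} + 2m·j_s ≡ 0 (mod 2n). Then ∑_{s=2δm+1}^{2n} ([s]_{2m} + 2m·j_s) = r(2r + 1) + 2m(rn − n + δ). -/
private lemma dvd_eq_of_lt_two_mul {N X : ℕ} (h : N ∣ X) (h1 : 0 < X) (h2 : X < 2*N) :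
    X = N := by
  obtain ⟨k, rfl⟩ := h
  match k with
  | 0 => simp at h1
  | 1 => simp
  | (k+2) =>
    exfalso
    have hle : N*2 ≤ N*(k+2) := Nat.mul_le_mul_left N (by omega)
    exact absurd h2 (not_lt.mpr (le_trans (le_of_eq (mul_comm 2 N)) hle))

private lemma aux_sum (m n r δ P : ℕ) (j : ℕ → ℕ)
    (hm : 2 ≤ m) (hr1 : 1 ≤ r) (hrm : r < m)
    (hδn : δ ≤ n - 1) (hP1 : 1 ≤ P) (hPn : P + r = n)
    (hQ2 : 2*r + 2*m*δ = 2*n)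
    (hgcd : Nat.gcd m n = 1)
    (hj : ∀ s, 1 ≤ s → j s ≤ n - 1 ∧ (s + s % (2 * m) + 2 * m * j s) % (2 * n) = 0)
    (hmod : ∀ t, 1 ≤ t → t ≤ 2*r → (2*P + t) % (2*m) = t) :
    ∑ s ∈ Finset.Icc (2*P + 1) (2*n), (s % (2 * m) + 2 * m * j s)
      = r * (2*r+1) + 2*m*((r-1)*n + δ) := by
  have hn1 : 1 ≤ n := by omega
  have ndvd : ∀ d, 2*n ∣ 2*m*d → n ∣ d := by
    intro d hd
    have h2 : 2*n ∣ 2*(m*d) := by rwa [← mul_assoc]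
    have h1 : n ∣ m*d := (Nat.mul_dvd_mul_iff_left (by norm_num : 0 < 2)).mp h2
    exact Nat.Coprime.dvd_of_dvd_mul_left (Nat.coprime_comm.mp hgcd) h1
  have esub : ∀ A X C : ℕ, A + (X + C) - (A + X) = C := by intro A X C; omega
  have juniq : ∀ s b, 1 ≤ s → b ≤ n - 1 → 2*n ∣ s + s % (2*m) + 2*m*b → j s = b := by
    intro s b hs hb hdvd
    obtain ⟨hj1, hj2⟩ := hj s hs
    have hd1 : 2*n ∣ s + s % (2*m) + 2*m*(j s) := Nat.dvd_of_mod_eq_zero hj2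
    have key : ∀ x y : ℕ, y ≤ n - 1 → 2*n ∣ s + s % (2*m) + 2*m*x →
        2*n ∣ s + s % (2*m) + 2*m*y → x ≤ y → x = y := by
      intro x y hy dx dy hxy
      obtain ⟨c, rfl⟩ := Nat.exists_eq_add_of_le hxy
      have hc : 2*n ∣ 2*m*c := by
        have h := Nat.dvd_sub dy dx
        rwa [mul_add, esub] at h
      have hc0 : c = 0 := Nat.eq_zero_of_dvd_of_lt (ndvd c hc) (by omega)
      omega
    rcases le_total (j s) b with h | h
    · exact key _ _ hb hd1 hdvd h
    · exact (key _ _ hj1 hdvd hd1 h).symm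
  have hjr : j (2*P + r) = 0 := by
    apply juniq _ _ (by omega) (by omega)
    rw [hmod r hr1 (by omega), mul_zero, add_zero]
    exact ⟨1, by omega⟩
  have hj2r : j (2*P + 2*r) = δ := by
    apply juniq _ _ (by omega) hδn
    rw [hmod (2*r) (by omega) (by omega), add_assoc (2*P + 2*r), hQ2]
    exact ⟨2, by omega⟩
  have hpair : ∀ t, 1 ≤ t → t ≤ 2*r - 1 → t ≠ r →
      j (2*P + t) + j (2*P + (2*r - t)) = n := by
    intro t ht1 ht2 htr
    obtain ⟨ha1, ha2⟩ := hj (2*P + t) (by omega)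
    obtain ⟨hb1, hb2⟩ := hj (2*P + (2*r - t)) (by omega)
    rw [hmod t ht1 (by omega)] at ha2
    rw [hmod (2*r - t) (by omega) (by omega)] at hb2
    have da : 2*n ∣ 2*P + t + t + 2*m*(j (2*P + t)) := Nat.dvd_of_mod_eq_zero ha2
    have db : 2*n ∣ 2*P + (2*r - t) + (2*r - t) + 2*m*(j (2*P + (2*r - t))) :=
      Nat.dvd_of_mod_eq_zero hb2
    have haz : j (2*P + t) ≠ 0 := by
      intro h0
      rw [h0, mul_zero, add_zero] at da
      have := dvd_eq_of_lt_two_mul da (by omega) (by omega)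
      omega
    have hsum : 2*n ∣ 2*m*(j (2*P + t) + j (2*P + (2*r - t))) := by
      have h12 := Nat.dvd_add da db
      have e : 2*P + t + t + 2*m*(j (2*P + t))
            + (2*P + (2*r - t) + (2*r - t) + 2*m*(j (2*P + (2*r - t))))
          = 2*n*2 + (2*m*(j (2*P + t)) + 2*m*(j (2*P + (2*r - t)))) := by
        generalize 2*m*(j (2*P + t)) = X
        generalize 2*m*(j (2*P + (2*r - t))) = Y
        omega
      rw [e] at h12
      rw [mul_add]
      exact (Nat.dvd_add_right ⟨2, rfl⟩).mp h12
    have hn' : n ∣ j (2*P + t) + j (2*P + (2*r - t)) := ndvd _ hsum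
    exact dvd_eq_of_lt_two_mul hn' (by omega) (by omega)
  -- main sum computation over t ∈ [1, 2r]
  have hsplit := Finset.sum_Icc_succ_top (a := 1) (b := 2*r - 1) (by omega)
      (fun t => t + 2*m*(j (2*P + t)))
  rw [show (2*r - 1) + 1 = 2*r from by omega] at hsplit
  have hrefl : ∑ t ∈ Finset.Icc 1 (2*r - 1), (t + 2*m*(j (2*P + t)))
      = ∑ t ∈ Finset.Icc 1 (2*r - 1), ((2*r - t) + 2*m*(j (2*P + (2*r - t)))) := by
    apply Finset.sum_nbij' (i := fun t => 2*r - t) (j := fun t => 2*r - t)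
    · intro a ha; simp only [Finset.mem_Icc] at ha ⊢; omega
    · intro a ha; simp only [Finset.mem_Icc] at ha ⊢; omega
    · intro a ha; simp only [Finset.mem_Icc] at ha; omega
    · intro a ha; simp only [Finset.mem_Icc] at ha; omega
    · intro a ha
      simp only [Finset.mem_Icc] at ha
      rw [show 2*r - (2*r - a) = a from by omega]
  obtain ⟨A, hA⟩ : ∃ A, A = ∑ t ∈ Finset.Icc 1 (2*r - 1), (t + 2*m*(j (2*P + t))) := ⟨_, rfl⟩
  have hAA : A + A = ∑ t ∈ Finset.Icc 1 (2*r - 1),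
      ((t + 2*m*(j (2*P + t))) + ((2*r - t) + 2*m*(j (2*P + (2*r - t))))) := by
    rw [hA]
    nth_rewrite 2 [hrefl]
    rw [← Finset.sum_add_distrib]
  have hptw : ∀ t ∈ Finset.Icc 1 (2*r - 1),
      (t + 2*m*(j (2*P + t))) + ((2*r - t) + 2*m*(j (2*P + (2*r - t))))
        = if t = r then 2*r else 2*r + 2*m*n := by
    intro t ht
    rw [Finset.mem_Icc] at ht
    by_cases htr : t = r
    · subst htr
      rw [if_pos rfl, show 2*t - t = t from by omega, hjr, mul_zero]
      omega
    · rw [if_neg htr]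
      have hp := hpair t ht.1 ht.2 htr
      have e : 2*m*(j (2*P + t)) + 2*m*(j (2*P + (2*r - t))) = 2*m*n := by
        rw [← mul_add, hp]
      generalize hX : 2*m*(j (2*P + t)) = X at e ⊢
      generalize hY : 2*m*(j (2*P + (2*r - t))) = Y at e ⊢
      generalize hZ : 2*m*n = Z at e ⊢
      omega
  rw [Finset.sum_congr rfl hptw] at hAA
  have hrmem : r ∈ Finset.Icc 1 (2*r - 1) := by
    simp only [Finset.mem_Icc]; omega
  have hsum2 : ∑ t ∈ Finset.Icc 1 (2*r - 1), (if t = r then 2*r else 2*r + 2*m*n)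
      = (2*r - 2)*(2*r + 2*m*n) + 2*r := by
    rw [Finset.sum_eq_sum_sdiff_singleton_add hrmem, if_pos rfl]
    congr 1
    have hconst : ∀ t ∈ Finset.Icc 1 (2*r - 1) \ {r},
        (if t = r then 2*r else 2*r + 2*m*n) = 2*r + 2*m*n := by
      intro t ht
      rw [Finset.mem_sdiff, Finset.mem_singleton] at ht
      rw [if_neg ht.2]
    rw [Finset.sum_congr rfl hconst, Finset.sum_const, smul_eq_mul,
      Finset.card_sdiff_of_subset (Finset.singleton_subset_iff.mpr hrmem),
      Finset.card_singleton, Nat.card_Icc]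
    congr 1 <;> omega
  rw [hsum2] at hAA
  obtain ⟨X, hX⟩ : ∃ X, X = (r - 1)*(2*r + 2*m*n) := ⟨_, rfl⟩
  have h2X : (2*r - 2)*(2*r + 2*m*n) = X + X := by
    rw [hX, ← add_mul]
    congr 1
    omega
  rw [h2X] at hAA
  have hAval : A = X + r := by omega
  -- reindex the original sum
  have hre : Finset.Icc (2*P + 1) (2*n)
      = Finset.map (addLeftEmbedding (2*P)) (Finset.Icc 1 (2*r)) := by
    rw [Finset.map_add_left_Icc]
    congr 1
    omega
  rw [hre, Finset.sum_map]
  simp only [addLeftEmbedding_apply]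
  have hg : ∀ t ∈ Finset.Icc 1 (2*r), (2*P + t) % (2*m) + 2*m * j (2*P + t)
      = t + 2*m*(j (2*P + t)) := by
    intro t ht
    rw [Finset.mem_Icc] at ht
    rw [hmod t ht.1 ht.2]
  rw [Finset.sum_congr rfl hg, hsplit, ← hA, hAval, hj2r, hQ2, hX]
  obtain ⟨a, rfl⟩ : ∃ a, r = a + 1 := ⟨r - 1, by omega⟩
  simp only [Nat.add_sub_cancel]
  have hQz : ((2*(a+1) : ℕ) : ℤ) + 2*m*δ = 2*n := by exact_mod_cast hQ2
  push_cast at hQz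
  zify
  linear_combination -hQz

/-- Let `m ≥ 2` and `n` be positive integers with `m < n` and
`gcd(m, n) = 1`, and set `δ := ⌊n/m⌋` and `r := n - δm` (so `1 ≤ r ≤ m - 1`).  For each
integer `s ≥ 1` let `j s` be the unique integer with `0 ≤ j s ≤ n - 1` and
`s + [s]_{2m} + 2m·(j s) ≡ 0 (mod 2n)`.  Then
`∑_{s=2δm+1}^{2n} ([s]_{2m} + 2m·(j s)) = r(2r + 1) + 2m(rn - n + δ)`. -/
theorem stmt_12 (m n : ℕ) (hm : 2 ≤ m) (hmn : m < n) (hgcd : Nat.gcd m n = 1)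
    (j : ℕ → ℕ)
    (hj : ∀ s, 1 ≤ s → j s ≤ n - 1 ∧ (s + s % (2 * m) + 2 * m * j s) % (2 * n) = 0) :
    ∑ s ∈ Finset.Icc (2 * (n / m) * m + 1) (2 * n), (s % (2 * m) + 2 * m * j s)
      = (n - (n / m) * m) * (2 * (n - (n / m) * m) + 1) +
        2 * m * ((n - (n / m) * m) * n - n + n / m) := by
  obtain ⟨δ, hδdef⟩ : ∃ δ, δ = n / m := ⟨_, rfl⟩
  obtain ⟨r, hrdef⟩ : ∃ r, r = n % m := ⟨_, rfl⟩
  have hdm : m * δ + r = n := by rw [hδdef, hrdef]; exact Nat.div_add_mod n m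
  have hrm : r < m := by rw [hrdef]; exact Nat.mod_lt n (by omega)
  have hr1 : 1 ≤ r := by
    rcases Nat.eq_zero_or_pos r with h0 | h
    · exfalso
      have hdvd : m ∣ n := Nat.dvd_of_mod_eq_zero (by omega : n % m = 0)
      have := Nat.gcd_eq_left hdvd
      omega
    · exact h
  have hδ1 : 1 ≤ δ := by
    rw [hδdef]; exact (Nat.one_le_div_iff (by omega)).mpr (by omega)
  have hδn : δ ≤ n - 1 := by
    have h2δ : 2*δ ≤ m*δ := Nat.mul_le_mul_right δ hm
    obtain ⟨Q, hQdef⟩ : ∃ Q, Q = m*δ := ⟨_, rfl⟩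
    rw [← hQdef] at hdm h2δ
    omega
  have hP1 : 1 ≤ δ * m := Nat.one_le_iff_ne_zero.mpr (by positivity)
  have hPn : δ * m + r = n := by rw [mul_comm]; exact hdm
  have hQ2 : 2*r + 2*m*δ = 2*n := by
    calc 2*r + 2*m*δ = 2*(m*δ + r) := by ring
    _ = 2*n := by rw [hdm]
  have hmod : ∀ t, 1 ≤ t → t ≤ 2*r → (2*(δ*m) + t) % (2*m) = t := by
    intro t h1 h2
    rw [show 2*(δ*m) + t = t + 2*m*δ from by ring, Nat.add_mul_mod_self_left,
      Nat.mod_eq_of_lt (by omega)]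
  have e1 : n - n / m * m = r := by
    rw [hrdef]; exact (Nat.eq_sub_of_add_eq (Nat.mod_add_div' n m)).symm
  rw [mul_assoc 2 (n/m) m, e1, ← hδdef,
    show r*n - n + δ = (r-1)*n + δ from by rw [tsub_mul, one_mul]]
  exact aux_sum m n r δ (δ*m) j hm hr1 hrm hδn hP1 hPn hQ2 hgcd hj hmod
end

section
/- Let f : ℍ → ℍ be a surjective ℝ-linear isometry of the real quaternions whose determinant as an ℝ-linear map equals 1. Then there exist unit quaternions q₁ and q₂ such that f(x) = q₁ · x · q₂⁻¹ for all x ∈ ℍ. -/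
/-!
By Cartan–Dieudonné, `f` is a product of reflections. In `ℍ` the reflection in the hyperplane
orthogonal to a unit vector `u` is `x ↦ -u x̄ u`, so a product of reflections has the form
`x ↦ a x b` or `x ↦ a x̄ b` with unit quaternions `a`, `b`, according as the number of nonzero
reflections is even or odd, that is, according as its determinant is `1` or `-1`.
-/

open Quaternion Submodule

def IsBimul (f : ℍ → ℍ) : Prop := ∃ a b : ℍ, ‖a‖ = 1 ∧ ‖b‖ = 1 ∧ ∀ x, f x = a * x * b

def IsBimulStar (f : ℍ → ℍ) : Prop := ∃ a b : ℍ, ‖a‖ = 1 ∧ ‖b‖ = 1 ∧ ∀ x, f x = a * star x * b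

lemma isBimul_id : IsBimul id := ⟨1, 1, norm_one, norm_one, fun _ => by simp⟩

lemma IsBimulStar.comp_isBimul {f g : ℍ → ℍ} (hg : IsBimulStar g) (hf : IsBimul f) :
    IsBimulStar (g ∘ f) := by
  obtain ⟨a, b, ha, hb, hg⟩ := hg
  obtain ⟨c, d, hc, hd, hf⟩ := hf
  refine ⟨a * star d, star c * b, by simp [ha, hd], by simp [hc, hb], fun x => ?_⟩
  simp only [Function.comp_apply, hf, hg, star_mul, mul_assoc]

lemma IsBimulStar.comp {f g : ℍ → ℍ} (hg : IsBimulStar g) (hf : IsBimulStar f) :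
    IsBimul (g ∘ f) := by
  obtain ⟨a, b, ha, hb, hg⟩ := hg
  obtain ⟨c, d, hc, hd, hf⟩ := hf
  refine ⟨a * star d, star c * b, by simp [ha, hd], by simp [hc, hb], fun x => ?_⟩
  simp only [Function.comp_apply, hf, hg, star_mul, star_star, mul_assoc]

lemma Quaternion.reflection_orthogonal_singleton_apply {v : ℍ} (hv : ‖v‖ = 1) (x : ℍ) :
    reflection (ℝ ∙ v)ᗮ x = -(v * star x * v) := by
  have hvv : star v * v = 1 := by
    rw [star_mul_self, normSq_eq_norm_mul_self, hv, mul_one, coe_one]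
  have hsandwich : v * star x * v = (2 * inner ℝ v x) • v - x := by
    rw [inner_def, ← coe_mul_eq_smul, ← self_add_star', star_mul, star_star, add_mul,
      mul_assoc x, hvv, mul_one, add_sub_cancel_right]
  rw [reflection_orthogonal_apply, reflection_singleton_apply, hsandwich, hv]
  module

lemma isBimulStar_reflection {v : ℍ} (hv : v ≠ 0) : IsBimulStar (reflection (ℝ ∙ v)ᗮ) := by
  set u := ‖v‖⁻¹ • v
  have hu : ‖u‖ = 1 := by simp [u, norm_smul, hv]
  have hspan : ℝ ∙ u = ℝ ∙ v := span_singleton_smul_eq (by simpa using hv) v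
  refine ⟨-u, u, by rwa [norm_neg], hu, fun x => ?_⟩
  simp only [← hspan, Quaternion.reflection_orthogonal_singleton_apply hu, neg_mul]

lemma reflection_orthogonal_singleton_zero {E : Type*} [NormedAddCommGroup E]
    [InnerProductSpace ℝ E] : reflection (ℝ ∙ (0 : E))ᗮ = 1 :=
  LinearIsometryEquiv.ext fun _ => reflection_mem_subspace_eq_self (by simp)

lemma det_reflection_orthogonal_singleton {E : Type*} [NormedAddCommGroup E]
    [InnerProductSpace ℝ E] [FiniteDimensional ℝ E] {v : E} (hv : v ≠ 0) :
    LinearMap.det (reflection (ℝ ∙ v)ᗮ).toLinearEquiv.toLinearMap = -1 := by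
  rw [det_reflection, orthogonal_orthogonal, finrank_span_singleton hv, pow_one]

lemma LinearIsometryEquiv.isBimul_det_one_or_isBimulStar_det_neg_one (φ : ℍ ≃ₗᵢ[ℝ] ℍ) :
    (IsBimul φ ∧ LinearMap.det φ.toLinearEquiv.toLinearMap = 1) ∨
      (IsBimulStar φ ∧ LinearMap.det φ.toLinearEquiv.toLinearMap = -1) := by
  obtain ⟨l, -, rfl⟩ := φ.reflections_generate_dim
  induction l with
  | nil => exact Or.inl ⟨isBimul_id, LinearMap.det_id⟩
  | cons v l ih =>
    set P := (l.map fun v => reflection (ℝ ∙ v)ᗮ).prod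
    rw [List.map_cons, List.prod_cons]
    by_cases hv : v = 0
    · rwa [hv, reflection_orthogonal_singleton_zero, one_mul]
    have hdet : LinearMap.det (reflection (ℝ ∙ v)ᗮ * P).toLinearEquiv.toLinearMap =
        -LinearMap.det P.toLinearEquiv.toLinearMap := by
      rw [← neg_one_mul, ← det_reflection_orthogonal_singleton hv]
      exact LinearMap.det_comp _ _
    rw [LinearIsometryEquiv.coe_mul, hdet]
    rcases ih with ⟨hP, hPdet⟩ | ⟨hP, hPdet⟩
    · exact Or.inr ⟨(isBimulStar_reflection hv).comp_isBimul hP, by rw [hPdet]⟩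
    · exact Or.inl ⟨(isBimulStar_reflection hv).comp hP, by rw [hPdet, neg_neg]⟩

theorem stmt_15_general (f : Quaternion ℝ →ₗ[ℝ] Quaternion ℝ)
    (hisom : ∀ x : Quaternion ℝ, ‖f x‖ = ‖x‖)
    (hdet : LinearMap.det f = 1) :
    ∃ q₁ q₂ : Quaternion ℝ, ‖q₁‖ = 1 ∧ ‖q₂‖ = 1 ∧
      ∀ x : Quaternion ℝ, f x = q₁ * x * q₂⁻¹ := by
  let φ : ℍ ≃ₗᵢ[ℝ] ℍ := LinearIsometry.toLinearIsometryEquiv ⟨f, hisom⟩ rfl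
  have hφ : LinearMap.det φ.toLinearEquiv.toLinearMap = 1 := hdet
  obtain ⟨⟨a, b, ha, hb, hab⟩, -⟩ :=
    φ.isBimul_det_one_or_isBimulStar_det_neg_one.resolve_right fun h => by norm_num [hφ] at h
  exact ⟨a, b⁻¹, ha, by rw [norm_inv, hb, inv_one], fun x => by rw [inv_inv]; exact hab x⟩

/-- Let `f : ℍ → ℍ` be a surjective `ℝ`-linear isometry of the real
quaternions whose determinant as an `ℝ`-linear map equals `1`.  Then there exist unit
quaternions `q₁` and `q₂` such that `f x = q₁ · x · q₂⁻¹` for all `x ∈ ℍ`. -/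
theorem stmt_15 (f : Quaternion ℝ →ₗ[ℝ] Quaternion ℝ)
    (hsurj : Function.Surjective f)
    (hisom : ∀ x : Quaternion ℝ, ‖f x‖ = ‖x‖)
    (hdet : LinearMap.det f = 1) :
    ∃ q₁ q₂ : Quaternion ℝ, ‖q₁‖ = 1 ∧ ‖q₂‖ = 1 ∧
      ∀ x : Quaternion ℝ, f x = q₁ * x * q₂⁻¹ :=
  stmt_15_general f hisom hdet
end

section
/- Let w₁, w₂ ∈ ℂ with |w₁|² + |w₂|² = 1, let q := w₁ + w₂ j ∈ ℍ, and let μ ∈ ℂ with μ ∉ ℝ. If the quaternion q · μ · q⁻¹ lies in the complex subfield ℂ ⊂ ℍ (i.e., its j- and k-components vanish), then w₁ = 0 or w₂ = 0; moreover q · μ · q⁻¹ = μ when w₂ = 0, and q · μ · q⁻¹ = μ̄ (the complex conjugate) when w₁ = 0. -/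
/-- The embedding `ℂ → ℍ` sending `a + b√-1` to the quaternion `a + b i`. -/
def toQuat (z : ℂ) : Quaternion ℝ := ⟨z.re, z.im, 0, 0⟩

/-- The quaternion `j`. -/
def quatJ : Quaternion ℝ := ⟨0, 0, 1, 0⟩

/-! Writing `q = w₁ + w₂ j`, the rule `j z = z̄ j` for complex `z` gives
`q μ q̄ = (|w₁|² μ + |w₂|² μ̄) + w₁ w₂ (μ̄ - μ) j`, and `q⁻¹ = q̄` because `|q|² = |w₁|² + |w₂|² = 1`.
So the `j`- and `k`-components of `q μ q⁻¹` vanish exactly when `w₁ w₂ (μ̄ - μ) = 0`, and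
`μ̄ ≠ μ` since `μ` is not real. -/

open ComplexConjugate

@[simp] lemma re_toQuat (z : ℂ) : (toQuat z).re = z.re := rfl
@[simp] lemma imI_toQuat (z : ℂ) : (toQuat z).imI = z.im := rfl
@[simp] lemma imJ_toQuat (z : ℂ) : (toQuat z).imJ = 0 := rfl
@[simp] lemma imK_toQuat (z : ℂ) : (toQuat z).imK = 0 := rfl

@[simp] lemma re_quatJ : quatJ.re = 0 := rfl
@[simp] lemma imI_quatJ : quatJ.imI = 0 := rfl
@[simp] lemma imJ_quatJ : quatJ.imJ = 1 := rfl
@[simp] lemma imK_quatJ : quatJ.imK = 0 := rfl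

@[simp]
lemma toQuat_zero : toQuat 0 = 0 := rfl

lemma imJ_toQuat_add_mul_quatJ (z w : ℂ) : (toQuat z + toQuat w * quatJ).imJ = w.re := by
  simp [Quaternion.imJ_mul]

lemma imK_toQuat_add_mul_quatJ (z w : ℂ) : (toQuat z + toQuat w * quatJ).imK = w.im := by
  simp [Quaternion.imK_mul]

lemma normSq_toQuat_add_mul_quatJ (z w : ℂ) :
    Quaternion.normSq (toQuat z + toQuat w * quatJ) = Complex.normSq z + Complex.normSq w := by
  simp [Quaternion.normSq_def', Complex.normSq_apply, Quaternion.re_mul, Quaternion.imI_mul,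
    Quaternion.imJ_mul, Quaternion.imK_mul]
  ring

lemma toQuat_add_mul_quatJ_mul_toQuat_mul_star (w₁ w₂ μ : ℂ) :
    (toQuat w₁ + toQuat w₂ * quatJ) * toQuat μ * star (toQuat w₁ + toQuat w₂ * quatJ) =
      toQuat (Complex.normSq w₁ * μ + Complex.normSq w₂ * conj μ) +
        toQuat (w₁ * w₂ * (conj μ - μ)) * quatJ := by
  ext <;> simp [Quaternion.re_mul, Quaternion.imI_mul, Quaternion.imJ_mul, Quaternion.imK_mul,
    Complex.normSq_apply] <;> ring

lemma inv_eq_star_of_normSq_eq_one {R : Type*} [Field R] [LinearOrder R] [IsStrictOrderedRing R]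
    {q : Quaternion R} (hq : Quaternion.normSq q = 1) :
    q⁻¹ = star q :=
  inv_eq_of_mul_eq_one_right (by rw [Quaternion.self_mul_star, hq, Quaternion.coe_one])

/-- Let `w₁, w₂ ∈ ℂ` with `|w₁|² + |w₂|² = 1`, let
`q := w₁ + w₂ j ∈ ℍ`, and let `μ ∈ ℂ` with `μ ∉ ℝ`.  If the quaternion `q · μ · q⁻¹` lies
in the complex subfield `ℂ ⊂ ℍ` (i.e. its `j`- and `k`-components vanish), then `w₁ = 0`
or `w₂ = 0`; moreover `q · μ · q⁻¹ = μ` when `w₂ = 0`, and `q · μ · q⁻¹ = μ̄` when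
`w₁ = 0`. -/
theorem stmt_17 (w₁ w₂ : ℂ) (h : Complex.normSq w₁ + Complex.normSq w₂ = 1)
    (μ : ℂ) (hμ : μ.im ≠ 0)
    (hJ : ((toQuat w₁ + toQuat w₂ * quatJ) * toQuat μ *
            (toQuat w₁ + toQuat w₂ * quatJ)⁻¹).imJ = 0)
    (hK : ((toQuat w₁ + toQuat w₂ * quatJ) * toQuat μ *
            (toQuat w₁ + toQuat w₂ * quatJ)⁻¹).imK = 0) :
    (w₁ = 0 ∨ w₂ = 0) ∧
    (w₂ = 0 → (toQuat w₁ + toQuat w₂ * quatJ) * toQuat μ *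
        (toQuat w₁ + toQuat w₂ * quatJ)⁻¹ = toQuat μ) ∧
    (w₁ = 0 → (toQuat w₁ + toQuat w₂ * quatJ) * toQuat μ *
        (toQuat w₁ + toQuat w₂ * quatJ)⁻¹ = toQuat (starRingEnd ℂ μ)) := by
  rw [inv_eq_star_of_normSq_eq_one (by rw [normSq_toQuat_add_mul_quatJ, h]),
    toQuat_add_mul_quatJ_mul_toQuat_mul_star] at hJ hK ⊢
  rw [imJ_toQuat_add_mul_quatJ] at hJ
  rw [imK_toQuat_add_mul_quatJ] at hK
  have hconj : conj μ - μ ≠ 0 := sub_ne_zero.mpr (mt Complex.conj_eq_iff_im.mp hμ)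
  have hprod : w₁ * w₂ = 0 :=
    (mul_eq_zero.mp (Complex.ext hJ hK)).resolve_right hconj
  refine ⟨mul_eq_zero.mp hprod, ?_, ?_⟩
  · rintro rfl
    simp [show Complex.normSq w₁ = 1 by simpa using h]
  · rintro rfl
    simp [show Complex.normSq w₂ = 1 by simpa using h]
end

section
/- Let m ≥ 1 be odd and n ≥ 2 with gcd(m, n) = 1, and let h := ζ_{2m}·I ∈ GL(2, ℂ) be the scalar matrix. Then there exists a group homomorphism ρ from the subgroup of GL(2, ℂ) generated by {h, x, y} to the multiplicative group ℂ* such that ρ(h) = ζ_{2m}^{2n}, ρ(x) = (−1)^n, and ρ(y) = 1. -/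
open Matrix

/-- value function: for diagonal or antidiagonal matrices this is ±det. -/
noncomputable def mval (A : Matrix (Fin 2) (Fin 2) ℂ) : ℂ :=
  A 0 0 * A 1 1 + A 0 1 * A 1 0

def diagOrAnti : Subgroup (GL (Fin 2) ℂ) where
  carrier := {g | ((g : Matrix (Fin 2) (Fin 2) ℂ) 0 1 = 0 ∧ (g : Matrix (Fin 2) (Fin 2) ℂ) 1 0 = 0)
    ∨ ((g : Matrix (Fin 2) (Fin 2) ℂ) 0 0 = 0 ∧ (g : Matrix (Fin 2) (Fin 2) ℂ) 1 1 = 0)}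
  one_mem' := Or.inl ⟨by simp [Matrix.one_apply], by simp [Matrix.one_apply]⟩
  mul_mem' := by
    rintro a b (⟨h1, h2⟩ | ⟨h1, h2⟩) (⟨h3, h4⟩ | ⟨h3, h4⟩)
    · exact Or.inl ⟨by simp [Units.val_mul, Matrix.mul_apply, Fin.sum_univ_two, h1, h2, h3, h4],
        by simp [Units.val_mul, Matrix.mul_apply, Fin.sum_univ_two, h1, h2, h3, h4]⟩
    · exact Or.inr ⟨by simp [Units.val_mul, Matrix.mul_apply, Fin.sum_univ_two, h1, h2, h3, h4],
        by simp [Units.val_mul, Matrix.mul_apply, Fin.sum_univ_two, h1, h2, h3, h4]⟩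
    · exact Or.inr ⟨by simp [Units.val_mul, Matrix.mul_apply, Fin.sum_univ_two, h1, h2, h3, h4],
        by simp [Units.val_mul, Matrix.mul_apply, Fin.sum_univ_two, h1, h2, h3, h4]⟩
    · exact Or.inl ⟨by simp [Units.val_mul, Matrix.mul_apply, Fin.sum_univ_two, h1, h2, h3, h4],
        by simp [Units.val_mul, Matrix.mul_apply, Fin.sum_univ_two, h1, h2, h3, h4]⟩
  inv_mem' := by
    rintro a (⟨h1, h2⟩ | ⟨h1, h2⟩)
    · refine Or.inl ⟨?_, ?_⟩ <;>
        rw [Matrix.coe_units_inv, Matrix.inv_def, Matrix.adjugate_fin_two] <;>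
        simp [h1, h2]
    · refine Or.inr ⟨?_, ?_⟩ <;>
        rw [Matrix.coe_units_inv, Matrix.inv_def, Matrix.adjugate_fin_two] <;>
        simp [h1, h2]

lemma mval_ne_zero (g : GL (Fin 2) ℂ) (hg : g ∈ diagOrAnti) :
    mval (g : Matrix (Fin 2) (Fin 2) ℂ) ≠ 0 := by
  have hdet : (g : Matrix (Fin 2) (Fin 2) ℂ).det ≠ 0 :=
    ((Matrix.isUnit_iff_isUnit_det _).mp g.isUnit).ne_zero
  rw [Matrix.det_fin_two] at hdet
  rcases hg with ⟨h1, h2⟩ | ⟨h1, h2⟩ <;> intro hc <;> apply hdet <;>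
    simp only [mval, h1, h2, zero_mul, mul_zero, add_zero, zero_add, sub_zero,
      zero_sub, neg_eq_zero] at hc ⊢ <;> exact hc

lemma mval_mul (a b : GL (Fin 2) ℂ) (ha : a ∈ diagOrAnti) (hb : b ∈ diagOrAnti) :
    mval ((a * b : GL (Fin 2) ℂ) : Matrix (Fin 2) (Fin 2) ℂ)
      = mval (a : Matrix (Fin 2) (Fin 2) ℂ) * mval (b : Matrix (Fin 2) (Fin 2) ℂ) := by
  rcases ha with ⟨h1, h2⟩ | ⟨h1, h2⟩ <;> rcases hb with ⟨h3, h4⟩ | ⟨h3, h4⟩ <;>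
    simp [mval, Units.val_mul, Matrix.mul_apply, Fin.sum_univ_two, h1, h2, h3, h4] <;> ring

noncomputable def mHom : diagOrAnti →* ℂˣ where
  toFun g := Units.mk0 (mval (g.1 : Matrix (Fin 2) (Fin 2) ℂ)) (mval_ne_zero g.1 g.2)
  map_one' := by
    ext
    simp [mval, Matrix.one_apply]
  map_mul' a b := by
    ext
    exact mval_mul a.1 b.1 a.2 b.2

/-- Let `m ≥ 1` be odd and `n ≥ 2` with `gcd(m, n) = 1`, and let
`h := ζ_{2m}·I ∈ GL(2, ℂ)` be the scalar matrix, `x := [[0,1],[-1,0]]`,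
`y := [[ζ_{2n}, 0], [0, ζ_{2n}⁻¹]]`.  Then there exists a group homomorphism `ρ` from the
subgroup of `GL(2, ℂ)` generated by `{h, x, y}` to the multiplicative group `ℂ*` with
`ρ(h) = ζ_{2m}^{2n}`, `ρ(x) = (-1)^n`, and `ρ(y) = 1`. -/
theorem stmt_19 (m n : ℕ) (hm : Odd m) (hm1 : 1 ≤ m) (hn : 2 ≤ n)
    (hgcd : Nat.gcd m n = 1)
    (h x y : GL (Fin 2) ℂ)
    (hh : (h : Matrix (Fin 2) (Fin 2) ℂ) = zeta (2 * m) • (1 : Matrix (Fin 2) (Fin 2) ℂ))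
    (hx : (x : Matrix (Fin 2) (Fin 2) ℂ) = !![0, 1; -1, 0])
    (hy : (y : Matrix (Fin 2) (Fin 2) ℂ) = !![zeta (2 * n), 0; 0, (zeta (2 * n))⁻¹]) :
    ∃ ρ : (Subgroup.closure {h, x, y} : Subgroup (GL (Fin 2) ℂ)) →* ℂˣ,
      ((ρ ⟨h, Subgroup.subset_closure (by simp)⟩ : ℂˣ) : ℂ) = zeta (2 * m) ^ (2 * n) ∧
      ((ρ ⟨x, Subgroup.subset_closure (by simp)⟩ : ℂˣ) : ℂ) = (-1 : ℂ) ^ n ∧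
      ((ρ ⟨y, Subgroup.subset_closure (by simp)⟩ : ℂˣ) : ℂ) = 1 := by
  have hle : Subgroup.closure {h, x, y} ≤ diagOrAnti := by
    rw [Subgroup.closure_le]
    rintro g (rfl | rfl | rfl)
    · exact Or.inl ⟨by simp [hh, Matrix.one_apply], by simp [hh, Matrix.one_apply]⟩
    · exact Or.inr ⟨by simp [hx], by simp [hx]⟩
    · exact Or.inl ⟨by simp [hy], by simp [hy]⟩
  refine ⟨(powMonoidHom n).comp (mHom.comp (Subgroup.inclusion hle)), ?_, ?_, ?_⟩
  · simp only [MonoidHom.comp_apply, powMonoidHom_apply, Units.val_pow_eq_pow_val]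
    have : mval ((h : GL (Fin 2) ℂ) : Matrix (Fin 2) (Fin 2) ℂ) = zeta (2 * m) ^ 2 := by
      simp [mval, hh, Matrix.one_apply]; ring
    rw [show ((mHom ((Subgroup.inclusion hle) ⟨h, _⟩) : ℂˣ) : ℂ)
        = mval ((h : GL (Fin 2) ℂ) : Matrix (Fin 2) (Fin 2) ℂ) from rfl, this, ← pow_mul]
  · simp only [MonoidHom.comp_apply, powMonoidHom_apply, Units.val_pow_eq_pow_val]
    rw [show ((mHom ((Subgroup.inclusion hle) ⟨x, _⟩) : ℂˣ) : ℂ)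
        = mval ((x : GL (Fin 2) ℂ) : Matrix (Fin 2) (Fin 2) ℂ) from rfl]
    simp [mval, hx]
  · simp only [MonoidHom.comp_apply, powMonoidHom_apply, Units.val_pow_eq_pow_val]
    rw [show ((mHom ((Subgroup.inclusion hle) ⟨y, _⟩) : ℂˣ) : ℂ)
        = mval ((y : GL (Fin 2) ℂ) : Matrix (Fin 2) (Fin 2) ℂ) from rfl]
    have hz : zeta (2 * n) ≠ 0 := Complex.exp_ne_zero _
    simp [mval, hy, mul_inv_cancel₀ hz]
end
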